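/- arXiv:1802.01003 — 5 statements merged into one kernel-verified Lean document; each statement's English description precedes it below -/
import Mathlib

section
/- For ψ ∈ T_n with representation ψ(s) = ∫(e^{s·v}−1)dμ(v) and finite ω_i := lim_{s→0⁻} ∂ψ/∂s_i, the divided-difference function φ_i(s, s_{n+1}) := (ψ(s) − ψ(s₁,…,s_{i−1}, s_{n+1}, s_{i+1},…,s_n))/(s_i − s_{n+1}) − ω_i (extended by ∂ψ/∂s_i(s) − ω_i when s_i = s_{n+1}) belongs to T_{n+1}. -/
open MeasureTheory Filter Set

/-- Coordinate partial derivative of a function of `n` real variables. -/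
noncomputable def pd {n : ℕ} (i : Fin n) (f : (Fin n → ℝ) → ℝ) : (Fin n → ℝ) → ℝ :=
  fun s => fderiv ℝ f s (Pi.single i 1)

/-- Iterated coordinate partial derivatives along a list of directions. -/
noncomputable def iterPD {n : ℕ} : List (Fin n) → ((Fin n → ℝ) → ℝ) → ((Fin n → ℝ) → ℝ)
  | [], f => f
  | i :: l, f => pd i (iterPD l f)

/-- The open negative orthant `(-∞,0)^n`. -/
def negOrth (n : ℕ) : Set (Fin n → ℝ) := {s | ∀ j, s j < 0}

/-- `f` is absolutely monotone on `(-∞,0)^n`: `f` and all of its partial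
derivatives of every order are nonnegative there. -/
def AbsMono {n : ℕ} (f : (Fin n → ℝ) → ℝ) : Prop :=
  ∀ l : List (Fin n), ∀ s ∈ negOrth n, 0 ≤ iterPD l f s

/-- The class `T_n` of nonpositive Bernstein functions of `n` variables:
nonpositive `C^∞` functions on `(-∞,0)^n` all of whose first partial
derivatives are absolutely monotone. -/
def InT {n : ℕ} (ψ : (Fin n → ℝ) → ℝ) : Prop :=
  ContDiffOn ℝ (⊤ : ℕ∞) ψ (negOrth n) ∧ (∀ s ∈ negOrth n, ψ s ≤ 0) ∧ ∀ i, AbsMono (pd i ψ)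


/-- The set `ℝ₊ⁿ \ {0}`. -/
def posSupp (n : ℕ) : Set (Fin n → ℝ) := {v | (∀ j, 0 ≤ v j) ∧ v ≠ 0}

/-- The divided difference `φ_i` of `ψ` in the `i`-th variable, minus `ω`. -/
noncomputable def divDiff {n : ℕ} (ψ : (Fin n → ℝ) → ℝ) (i : Fin n) (ω : ℝ) :
    (Fin (n + 1) → ℝ) → ℝ := fun t =>
  (if t i.castSucc = t (Fin.last n) then pd i ψ (fun j => t j.castSucc)
   else (ψ (fun j => t j.castSucc) -
      ψ (Function.update (fun j => t j.castSucc) i (t (Fin.last n)))) /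
        (t i.castSucc - t (Fin.last n))) - ω

lemma isOpen_negOrth (n : ℕ) : IsOpen (negOrth n) := by
  have : negOrth n = Set.pi Set.univ (fun _ : Fin n => Iio (0:ℝ)) := by
    ext s; simp [negOrth, Set.mem_pi]
  rw [this]
  exact isOpen_set_pi Set.finite_univ (fun _ _ => isOpen_Iio)

noncomputable def cCLM {n : ℕ} (i : Fin n) (θ : ℝ) :
    (Fin (n+1) → ℝ) →L[ℝ] (Fin n → ℝ) :=
  ContinuousLinearMap.pi (fun j =>
    if j = i then (1-θ) • ContinuousLinearMap.proj (Fin.last n)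
        + θ • ContinuousLinearMap.proj i.castSucc
    else ContinuousLinearMap.proj j.castSucc)

lemma cCLM_apply {n : ℕ} (i : Fin n) (θ : ℝ) (t : Fin (n+1) → ℝ) (j : Fin n) :
    cCLM i θ t j =
      if j = i then (1-θ) * t (Fin.last n) + θ * t i.castSucc else t j.castSucc := by
  simp [cCLM, ContinuousLinearMap.pi_apply]
  split_ifs <;> simp [smul_eq_mul]

lemma cCLM_eq_update {n : ℕ} (i : Fin n) (θ : ℝ) (t : Fin (n+1) → ℝ) :
    cCLM i θ t = Function.update (fun j => t j.castSucc) i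
      ((1-θ) * t (Fin.last n) + θ * t i.castSucc) := by
  funext j
  rw [cCLM_apply, Function.update_apply]

lemma cCLM_mem_negOrth {n : ℕ} (i : Fin n) {θ : ℝ} (hθ : θ ∈ Icc (0:ℝ) 1)
    {t : Fin (n+1) → ℝ} (ht : t ∈ negOrth (n+1)) : cCLM i θ t ∈ negOrth n := by
  intro j
  rw [cCLM_apply]
  split_ifs with h
  · have h1 : t (Fin.last n) < 0 := ht _
    have h2 : t i.castSucc < 0 := ht _
    obtain ⟨hθ0, hθ1⟩ := hθ
    rcases hθ0.lt_or_eq with hpos | hzero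
    · have hA : θ * t i.castSucc < 0 := mul_neg_of_pos_of_neg hpos h2
      have hL : (1-θ) * t (Fin.last n) ≤ 0 :=
        mul_nonpos_of_nonneg_of_nonpos (by linarith) h1.le
      linarith
    · rw [← hzero]; simpa using h1
  · exact ht _

lemma cCLM_affine {n : ℕ} (i : Fin n) (θ : ℝ) (t : Fin (n+1) → ℝ) :
    cCLM i θ t = cCLM i 0 t + θ • (cCLM i 1 t - cCLM i 0 t) := by
  funext j
  simp only [Pi.add_apply, Pi.smul_apply, Pi.sub_apply, cCLM_apply, smul_eq_mul]
  split_ifs <;> ring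

lemma continuous_cCLM_pair {n : ℕ} (i : Fin n) :
    Continuous (fun p : ℝ × (Fin (n+1) → ℝ) => cCLM i p.1 p.2) := by
  refine continuous_pi (fun j => ?_)
  have h : (fun p : ℝ × (Fin (n+1) → ℝ) => cCLM i p.1 p.2 j)
      = fun p => if j = i then (1-p.1) * p.2 (Fin.last n) + p.1 * p.2 i.castSucc
          else p.2 j.castSucc := by
    funext p; exact cCLM_apply i p.1 p.2 j
  rw [h]
  split_ifs
  · fun_prop
  · fun_prop

lemma continuous_cCLM_theta {n : ℕ} (i : Fin n) (t : Fin (n+1) → ℝ) :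
    Continuous (fun θ : ℝ => cCLM i θ t) := by
  have h : (fun θ : ℝ => cCLM i θ t)
      = (fun p : ℝ × (Fin (n+1) → ℝ) => cCLM i p.1 p.2) ∘ (fun θ => (θ, t)) := rfl
  rw [h]
  exact (continuous_cCLM_pair i).comp (continuous_id.prodMk continuous_const)

lemma cCLM_norm_le {n : ℕ} (i : Fin n) {θ : ℝ} (hθ : θ ∈ Icc (0:ℝ) 1) :
    ‖cCLM i θ‖ ≤ 1 := by
  refine ContinuousLinearMap.opNorm_le_bound _ zero_le_one (fun t => ?_)
  rw [one_mul]
  refine (pi_norm_le_iff_of_nonneg (norm_nonneg t)).2 (fun j => ?_)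
  rw [cCLM_apply]
  split_ifs with h
  · obtain ⟨hθ0, hθ1⟩ := hθ
    have h1 : |t (Fin.last n)| ≤ ‖t‖ := norm_le_pi_norm t _
    have h2 : |t i.castSucc| ≤ ‖t‖ := norm_le_pi_norm t _
    have := abs_nonneg (t (Fin.last n))
    calc ‖(1-θ) * t (Fin.last n) + θ * t i.castSucc‖
        ≤ |(1-θ) * t (Fin.last n)| + |θ * t i.castSucc| := abs_add_le _ _
      _ ≤ (1-θ) * ‖t‖ + θ * ‖t‖ := by
          rw [abs_mul, abs_mul, abs_of_nonneg (by linarith : (0:ℝ) ≤ 1 - θ),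
            abs_of_nonneg hθ0]
          have h0 : (0:ℝ) ≤ 1 - θ := by linarith
          exact add_le_add (mul_le_mul_of_nonneg_left h1 h0)
            (mul_le_mul_of_nonneg_left h2 hθ0)
      _ = ‖t‖ := by ring
  · exact norm_le_pi_norm t _

def dir {n : ℕ} (i : Fin n) (k : Fin (n+1)) : Fin n :=
  if h : k = Fin.last n then i else k.castPred h

noncomputable def coefW {n : ℕ} (i : Fin n) (k : Fin (n+1)) (θ : ℝ) : ℝ :=
  if h : k = Fin.last n then (1-θ) else if k.castPred h = i then θ else 1

lemma continuous_coefW {n : ℕ} (i : Fin n) (k : Fin (n+1)) :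
    Continuous (coefW i k) := by
  unfold coefW
  split_ifs <;> fun_prop

lemma coefW_nonneg {n : ℕ} (i : Fin n) (k : Fin (n+1)) {θ : ℝ} (hθ : θ ∈ Set.Icc (0:ℝ) 1) :
    0 ≤ coefW i k θ := by
  obtain ⟨h0, h1⟩ := hθ
  unfold coefW
  split_ifs <;> linarith

lemma cCLM_single {n : ℕ} (i : Fin n) (θ : ℝ) (k : Fin (n+1)) :
    cCLM i θ (Pi.single k 1) = Pi.single (dir i k) (coefW i k θ) := by
  funext j
  rw [cCLM_apply]
  by_cases hk : k = Fin.last n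
  · subst hk
    have hics : i.castSucc ≠ Fin.last n := (Fin.castSucc_lt_last i).ne
    have hjcs : j.castSucc ≠ Fin.last n := (Fin.castSucc_lt_last j).ne
    simp only [dir, coefW, dif_pos rfl]
    by_cases hj : j = i
    · subst hj
      simp [Pi.single_apply, hics]
    · simp [Pi.single_apply, hjcs, hj, if_neg hj]
  · have hcs : (k.castPred hk).castSucc = k := Fin.castSucc_castPred k hk
    have hlast : (Pi.single k 1 : Fin (n+1) → ℝ) (Fin.last n) = 0 := by
      rw [Pi.single_apply, if_neg (fun h => hk h.symm)]
    have hcsval : ∀ j' : Fin n, (Pi.single k 1 : Fin (n+1) → ℝ) j'.castSucc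
        = if j' = k.castPred hk then 1 else 0 := by
      intro j'
      by_cases hjk : j' = k.castPred hk
      · subst hjk; rw [Pi.single_apply, if_pos hcs, if_pos rfl]
      · rw [Pi.single_apply, if_neg (fun h => hjk (by rw [← hcs, Fin.castSucc_inj] at h; exact h)),
          if_neg hjk]
    have hdir : dir i k = k.castPred hk := dif_neg hk
    have hcoef : coefW i k θ = if k.castPred hk = i then θ else 1 := dif_neg hk
    rw [hdir, hcoef]
    simp only [hlast, hcsval, Pi.single_apply]
    by_cases hi : k.castPred hk = i <;> by_cases hj : j = i <;>
        by_cases hjk : j = k.castPred hk <;>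
      simp only [hi, hj, hjk, if_pos, if_neg, if_true, if_false, eq_self_iff_true,
        not_true, not_false_iff] <;> simp_all <;> ring

noncomputable def Iw {n : ℕ} (i : Fin n) (w : ℝ → ℝ) (f : (Fin n → ℝ) → ℝ) :
    (Fin (n+1) → ℝ) → ℝ :=
  fun t => ∫ θ in (0:ℝ)..1, w θ * f (cCLM i θ t)

lemma contOn_integrand {n : ℕ} (i : Fin n) {f : (Fin n → ℝ) → ℝ}
    (hf : ContinuousOn f (negOrth n)) {w : ℝ → ℝ} (hw : Continuous w)
    {t : Fin (n+1) → ℝ} (ht : t ∈ negOrth (n+1)) :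
    ContinuousOn (fun θ => w θ * f (cCLM i θ t)) (Set.Icc (0:ℝ) 1) :=
  hw.continuousOn.mul (hf.comp (continuous_cCLM_theta i t).continuousOn
    (fun θ hθ => cCLM_mem_negOrth i hθ ht))

lemma intervalIntegrable_integrand {n : ℕ} (i : Fin n) {f : (Fin n → ℝ) → ℝ}
    (hf : ContinuousOn f (negOrth n)) {w : ℝ → ℝ} (hw : Continuous w)
    {t : Fin (n+1) → ℝ} (ht : t ∈ negOrth (n+1)) :
    IntervalIntegrable (fun θ => w θ * f (cCLM i θ t)) MeasureTheory.volume 0 1 := by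
  apply ContinuousOn.intervalIntegrable
  rw [Set.uIcc_of_le zero_le_one]
  exact contOn_integrand i hf hw ht

lemma Iw_nonneg {n : ℕ} (i : Fin n) {w : ℝ → ℝ} {f : (Fin n → ℝ) → ℝ}
    (hw : ∀ θ ∈ Set.Icc (0:ℝ) 1, 0 ≤ w θ) (hf : ∀ s ∈ negOrth n, 0 ≤ f s)
    {t : Fin (n+1) → ℝ} (ht : t ∈ negOrth (n+1)) : 0 ≤ Iw i w f t := by
  refine intervalIntegral.integral_nonneg zero_le_one (fun θ hθ => ?_)
  exact mul_nonneg (hw θ hθ) (hf _ (cCLM_mem_negOrth i hθ ht))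

set_option synthInstance.maxHeartbeats 1000000
set_option maxHeartbeats 1000000
lemma top_add_one_le : (((⊤:ℕ∞):WithTop ℕ∞) + 1) ≤ ((⊤:ℕ∞):WithTop ℕ∞) := by
  rw [← WithTop.coe_one, ← WithTop.coe_add]
  exact WithTop.coe_le_coe.2 le_top

lemma pd_contDiffOn {n : ℕ} {f : (Fin n → ℝ) → ℝ}
    (hf : ContDiffOn ℝ (⊤ : ℕ∞) f (negOrth n)) (j : Fin n) :
    ContDiffOn ℝ (⊤ : ℕ∞) (pd j f) (negOrth n) := by
  have h1 : ContDiffOn ℝ (⊤ : ℕ∞) (fderiv ℝ f) (negOrth n) :=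
    hf.fderiv_of_isOpen (isOpen_negOrth n) top_add_one_le
  exact h1.clm_apply contDiffOn_const

lemma iterPD_contDiffOn {n : ℕ} {f : (Fin n → ℝ) → ℝ}
    (hf : ContDiffOn ℝ (⊤ : ℕ∞) f (negOrth n)) :
    ∀ l : List (Fin n), ContDiffOn ℝ (⊤ : ℕ∞) (iterPD l f) (negOrth n)
  | [] => hf
  | j :: l => pd_contDiffOn (iterPD_contDiffOn hf l) j

lemma diffAt_of_contDiffOn {n : ℕ} {f : (Fin n → ℝ) → ℝ}
    (hf : ContDiffOn ℝ (⊤ : ℕ∞) f (negOrth n)) {s : Fin n → ℝ} (hs : s ∈ negOrth n) :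
    DifferentiableAt ℝ f s :=
  (hf.differentiableOn (by simp)).differentiableAt ((isOpen_negOrth n).mem_nhds hs)

lemma fderivContOn {n : ℕ} {f : (Fin n → ℝ) → ℝ}
    (hf : ContDiffOn ℝ (⊤ : ℕ∞) f (negOrth n)) :
    ContinuousOn (fderiv ℝ f) (negOrth n) :=
  (hf.fderiv_of_isOpen (isOpen_negOrth n) top_add_one_le).continuousOn

lemma cCLM_affine' {n : ℕ} (i : Fin n) (θ : ℝ) :
    cCLM i θ = cCLM i 0 + θ • (cCLM i 1 - cCLM i 0) :=
  ContinuousLinearMap.ext fun t => by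
    rw [cCLM_affine i θ t]
    simp

lemma continuous_cCLM_clm {n : ℕ} (i : Fin n) :
    Continuous (fun θ : ℝ => cCLM i θ) := by
  have h : (fun θ : ℝ => cCLM i θ)
      = fun θ : ℝ => cCLM i 0 + θ • (cCLM i 1 - cCLM i 0) := funext (cCLM_affine' i)
  rw [h]
  exact continuous_const.add (continuous_id.smul continuous_const)

lemma contOn_F' {n : ℕ} (i : Fin n) {w : ℝ → ℝ} (hw : Continuous w)
    {f : (Fin n → ℝ) → ℝ} (hf : ContDiffOn ℝ (⊤ : ℕ∞) f (negOrth n))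
    {x : Fin (n+1) → ℝ} (hx : x ∈ negOrth (n+1)) :
    ContinuousOn (fun θ : ℝ => w θ • ((fderiv ℝ f (cCLM i θ x)).comp (cCLM i θ)))
      (Set.Icc (0:ℝ) 1) := by
  have hc1 : ContinuousOn (fun θ : ℝ => fderiv ℝ f (cCLM i θ x)) (Set.Icc (0:ℝ) 1) :=
    (fderivContOn hf).comp (continuous_cCLM_theta i x).continuousOn
      (fun θ hθ => cCLM_mem_negOrth i hθ hx)
  exact hw.continuousOn.smul (hc1.clm_comp (continuous_cCLM_clm i).continuousOn)

lemma hasFDerivAt_Iw {n : ℕ} (i : Fin n) {w : ℝ → ℝ} (hw : Continuous w)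
    {f : (Fin n → ℝ) → ℝ} (hf : ContDiffOn ℝ (⊤ : ℕ∞) f (negOrth n))
    {t₀ : Fin (n+1) → ℝ} (ht₀ : t₀ ∈ negOrth (n+1)) :
    HasFDerivAt (Iw i w f)
      (∫ θ in (0:ℝ)..1, w θ • ((fderiv ℝ f (cCLM i θ t₀)).comp (cCLM i θ))) t₀ := by
  obtain ⟨ε₀, hε₀, hball₀⟩ := Metric.isOpen_iff.1 (isOpen_negOrth (n+1)) t₀ ht₀
  set ε := ε₀ / 2 with hεdef
  have hε : 0 < ε := by positivity
  have hball : Metric.closedBall t₀ ε ⊆ negOrth (n+1) :=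
    (Metric.closedBall_subset_ball (by linarith)).trans hball₀
  set K := (fun p : ℝ × (Fin (n+1) → ℝ) => cCLM i p.1 p.2) ''
    (Set.Icc (0:ℝ) 1 ×ˢ Metric.closedBall t₀ ε) with hKdef
  have hKc : IsCompact K :=
    (isCompact_Icc.prod (isCompact_closedBall t₀ ε)).image (continuous_cCLM_pair i)
  have hKsub : K ⊆ negOrth n := by
    rintro - ⟨⟨θ, x⟩, ⟨hθ, hx⟩, rfl⟩
    exact cCLM_mem_negOrth i hθ (hball hx)
  obtain ⟨C, hC⟩ := hKc.exists_bound_of_continuousOn ((fderivContOn hf).mono hKsub)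
  obtain ⟨W, hW⟩ := isCompact_Icc.exists_bound_of_continuousOn
    (hw.continuousOn (s := Set.Icc (0:ℝ) 1))
  have hIsub : Set.uIoc (0:ℝ) 1 ⊆ Set.Icc (0:ℝ) 1 := by
    rw [Set.uIoc_of_le zero_le_one]; exact Set.Ioc_subset_Icc_self
  refine intervalIntegral.hasFDerivAt_integral_of_dominated_of_fderiv_le
    (𝕜 := ℝ) (F' := fun x θ => w θ • ((fderiv ℝ f (cCLM i θ x)).comp (cCLM i θ)))
    (bound := fun _ => max W 0 * max C 0) (Metric.ball_mem_nhds t₀ hε) ?_ ?_ ?_ ?_ ?_ ?_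
  · filter_upwards [(isOpen_negOrth (n+1)).mem_nhds ht₀] with x hx
    exact ((contOn_integrand i hf.continuousOn hw hx).mono hIsub).aestronglyMeasurable
      measurableSet_uIoc
  · exact intervalIntegrable_integrand i hf.continuousOn hw ht₀
  · exact ((contOn_F' i hw hf ht₀).mono hIsub).aestronglyMeasurable measurableSet_uIoc
  · refine Filter.Eventually.of_forall (fun θ hθ x hx => ?_)
    have hθ' : θ ∈ Set.Icc (0:ℝ) 1 := hIsub hθ
    have hxK : cCLM i θ x ∈ K :=
      ⟨(θ, x), ⟨hθ', Metric.ball_subset_closedBall hx⟩, rfl⟩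
    show ‖w θ • ((fderiv ℝ f (cCLM i θ x)).comp (cCLM i θ))‖ ≤ max W 0 * max C 0
    rw [norm_smul (w θ) ((fderiv ℝ f (cCLM i θ x)).comp (cCLM i θ))]
    have h1 : ‖(fderiv ℝ f (cCLM i θ x)).comp (cCLM i θ)‖ ≤ max C 0 * 1 := by
      refine (ContinuousLinearMap.opNorm_comp_le _ _).trans ?_
      exact mul_le_mul ((hC _ hxK).trans (le_max_left _ _)) (cCLM_norm_le i hθ')
        (norm_nonneg _) (le_max_right _ _)
    rw [mul_one] at h1
    exact mul_le_mul ((hW θ hθ').trans (le_max_left _ _)) h1 (norm_nonneg _)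
      (le_max_right _ _)
  · exact intervalIntegrable_const
  · refine Filter.Eventually.of_forall (fun θ hθ x hx => ?_)
    have hθ' : θ ∈ Set.Icc (0:ℝ) 1 := hIsub hθ
    have hx' : x ∈ negOrth (n+1) := hball (Metric.ball_subset_closedBall hx)
    have hmem : cCLM i θ x ∈ negOrth n := cCLM_mem_negOrth i hθ' hx'
    have hdf : HasFDerivAt f (fderiv ℝ f (cCLM i θ x)) (cCLM i θ x) :=
      (diffAt_of_contDiffOn hf hmem).hasFDerivAt
    exact (hdf.comp x ((cCLM i θ).hasFDerivAt)).const_mul (w θ)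

lemma pd_Iw {n : ℕ} (i : Fin n) (k : Fin (n+1)) {w : ℝ → ℝ} (hw : Continuous w)
    {f : (Fin n → ℝ) → ℝ} (hf : ContDiffOn ℝ (⊤ : ℕ∞) f (negOrth n))
    {t : Fin (n+1) → ℝ} (ht : t ∈ negOrth (n+1)) :
    pd k (Iw i w f) t = Iw i (fun θ => w θ * coefW i k θ) (pd (dir i k) f) t := by
  have h := hasFDerivAt_Iw i hw hf ht
  have hInt : IntervalIntegrable
      (fun θ : ℝ => w θ • ((fderiv ℝ f (cCLM i θ t)).comp (cCLM i θ)))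
      MeasureTheory.volume 0 1 := by
    apply ContinuousOn.intervalIntegrable
    rw [Set.uIcc_of_le zero_le_one]
    exact contOn_F' i hw hf ht
  unfold pd
  rw [h.fderiv, ContinuousLinearMap.intervalIntegral_apply hInt (Pi.single k 1)]
  unfold Iw
  have heq : (fun θ : ℝ =>
      (w θ • ((fderiv ℝ f (cCLM i θ t)).comp (cCLM i θ))) (Pi.single k 1))
      = fun θ : ℝ => (w θ * coefW i k θ) * pd (dir i k) f (cCLM i θ t) := by
    funext θ
    have hsingle : (Pi.single (dir i k) (coefW i k θ) : Fin n → ℝ)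
        = coefW i k θ • (Pi.single (dir i k) 1 : Fin n → ℝ) := by
      funext j
      by_cases hj : j = dir i k <;> simp [Pi.single_apply, hj]
    simp only [ContinuousLinearMap.smul_apply, ContinuousLinearMap.comp_apply,
      smul_eq_mul]
    rw [cCLM_single, hsingle, _root_.map_smul]
    unfold pd
    simp only [smul_eq_mul]
    ring
  rw [heq]
  simp only [pd]

lemma pd_congr_open {n : ℕ} {f g : (Fin n → ℝ) → ℝ} {U : Set (Fin n → ℝ)}
    (hU : IsOpen U) (h : ∀ x ∈ U, f x = g x) (k : Fin n) :
    ∀ x ∈ U, pd k f x = pd k g x := by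
  intro x hx
  unfold pd
  rw [Filter.EventuallyEq.fderiv_eq (Filter.eventually_of_mem (hU.mem_nhds hx) h)]

lemma iterPD_congr_open {n : ℕ} {U : Set (Fin n → ℝ)} (hU : IsOpen U) :
    ∀ (l : List (Fin n)) {f g : (Fin n → ℝ) → ℝ}, (∀ x ∈ U, f x = g x) →
      ∀ x ∈ U, iterPD l f x = iterPD l g x
  | [], f, g, h => h
  | k :: l, f, g, h => by
    intro x hx
    exact pd_congr_open hU (iterPD_congr_open hU l h) k x hx

lemma iterPD_append {n : ℕ} (k : Fin n) :
    ∀ (l : List (Fin n)) (f : (Fin n → ℝ) → ℝ),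
      iterPD (l ++ [k]) f = iterPD l (pd k f)
  | [], f => rfl
  | j :: l, f => by
    show pd j (iterPD (l ++ [k]) f) = pd j (iterPD l (pd k f))
    rw [iterPD_append k l f]

lemma pd_sub_const {n : ℕ} (f : (Fin n → ℝ) → ℝ) (c : ℝ) (k : Fin n) :
    pd k (fun t => f t - c) = pd k f := by
  funext x
  unfold pd
  rw [fderiv_sub_const]

lemma continuous_wl {n : ℕ} (i : Fin n) (l : List (Fin (n+1))) {w : ℝ → ℝ}
    (hw : Continuous w) :
    Continuous fun θ => w θ * (l.map (fun k => coefW i k θ)).prod := by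
  induction l with
  | nil => simpa using hw
  | cons k l ih =>
    have : (fun θ => w θ * ((k :: l).map (fun k' => coefW i k' θ)).prod)
        = fun θ => coefW i k θ * (w θ * (l.map (fun k' => coefW i k' θ)).prod) := by
      funext θ; simp [List.prod_cons]; ring
    rw [this]
    exact (continuous_coefW i k).mul ih

lemma iterPD_Iw {n : ℕ} (i : Fin n) :
    ∀ (l : List (Fin (n+1))) {w : ℝ → ℝ}, Continuous w →
      ∀ {f : (Fin n → ℝ) → ℝ}, ContDiffOn ℝ (⊤ : ℕ∞) f (negOrth n) →
      ∀ t ∈ negOrth (n+1),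
      iterPD l (Iw i w f) t
        = Iw i (fun θ => w θ * (l.map (fun k => coefW i k θ)).prod)
            (iterPD (l.map (dir i)) f) t := by
  intro l
  induction l with
  | nil =>
    intro w hw f hf t ht
    show Iw i w f t = Iw i (fun θ => w θ * 1) f t
    unfold Iw
    simp
  | cons k l ih =>
    intro w hw f hf t ht
    show pd k (iterPD l (Iw i w f)) t = _
    have h1 : pd k (iterPD l (Iw i w f)) t
        = pd k (Iw i (fun θ => w θ * (l.map (fun k' => coefW i k' θ)).prod)
            (iterPD (l.map (dir i)) f)) t :=
      pd_congr_open (isOpen_negOrth (n+1)) (ih hw hf) k t ht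
    rw [h1, pd_Iw i k (continuous_wl i l hw) (iterPD_contDiffOn hf _) ht]
    show Iw i _ (pd (dir i k) (iterPD (l.map (dir i)) f)) t = _
    have h2 : (fun θ => (w θ * (l.map (fun k' => coefW i k' θ)).prod) * coefW i k θ)
        = fun θ => w θ * (((k :: l).map (fun k' => coefW i k' θ)).prod) := by
      funext θ; simp [List.prod_cons]; ring
    rw [h2]
    rfl

lemma update_eq_affine {n : ℕ} (s : Fin n → ℝ) (i : Fin n) :
    (fun u : ℝ => Function.update s i u)
      = fun u => (Function.update s i 0 + u • (Pi.single i 1 : Fin n → ℝ)) := by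
  funext u j
  by_cases hj : j = i
  · subst hj; simp [Function.update_apply]
  · simp [Function.update_apply, hj, Pi.single_apply]

lemma update_mem_negOrth {n : ℕ} {s : Fin n → ℝ} (hs : s ∈ negOrth n) (i : Fin n)
    {u : ℝ} (hu : u < 0) : Function.update s i u ∈ negOrth n := by
  intro j
  by_cases hj : j = i
  · subst hj; simp [hu]
  · simp [Function.update_apply, hj]; exact hs j

lemma divDiff_eq_Iw {n : ℕ} (ψ : (Fin n → ℝ) → ℝ)
    (hψc : ContDiffOn ℝ (⊤ : ℕ∞) ψ (negOrth n)) (i : Fin n) (ω : ℝ) :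
    ∀ t ∈ negOrth (n+1), divDiff ψ i ω t = Iw i (fun _ => 1) (pd i ψ) t - ω := by
  intro t ht
  have hsmem : (fun j => t j.castSucc) ∈ negOrth n := fun j => ht j.castSucc
  set s : Fin n → ℝ := fun j => t j.castSucc with hsdef
  set a : ℝ := t i.castSucc with hadef
  set b : ℝ := t (Fin.last n) with hbdef
  have ha0 : a < 0 := ht i.castSucc
  have hb0 : b < 0 := ht (Fin.last n)
  have hsi : s i = a := rfl
  have hgcont : ContinuousOn (pd i ψ) (negOrth n) := (pd_contDiffOn hψc i).continuousOn
  unfold divDiff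
  by_cases hab : a = b
  · rw [if_pos hab]
    have hc : ∀ θ : ℝ, cCLM i θ t = s := by
      intro θ
      rw [cCLM_eq_update]
      have hv : (1-θ) * t (Fin.last n) + θ * t i.castSucc = a := by
        rw [← hadef, ← hbdef, ← hab]; ring
      rw [hv, ← hsi, Function.update_eq_self]
    show pd i ψ s - ω = Iw i (fun _ => 1) (pd i ψ) t - ω
    unfold Iw
    have : (fun θ : ℝ => (1:ℝ) * pd i ψ (cCLM i θ t)) = fun _ : ℝ => pd i ψ s := by
      funext θ; rw [one_mul, hc θ]
    rw [this, intervalIntegral.integral_const]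
    norm_num
  · rw [if_neg hab]
    have hceq : ∀ θ : ℝ, cCLM i θ t = Function.update s i ((a - b) * θ + b) := by
      intro θ
      rw [cCLM_eq_update]
      congr 1
      rw [← hadef, ← hbdef]; ring
    have huIcc : ∀ u ∈ Set.uIcc b a, u < 0 := by
      intro u hu
      rcases Set.mem_uIcc.1 hu with h | h
      · exact lt_of_le_of_lt h.2 ha0
      · exact lt_of_le_of_lt h.2 hb0
    have hg : ∀ u ∈ Set.uIcc b a,
        HasDerivAt (fun u => ψ (Function.update s i u))
          (pd i ψ (Function.update s i u)) u := by
      intro u hu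
      have hmem : Function.update s i u ∈ negOrth n :=
        update_mem_negOrth hsmem i (huIcc u hu)
      have hA : HasDerivAt (fun u : ℝ => Function.update s i u)
          ((Pi.single i 1 : Fin n → ℝ)) u := by
        rw [update_eq_affine s i]
        simpa using ((hasDerivAt_id u).smul_const (Pi.single i 1 : Fin n → ℝ)).const_add
          (Function.update s i 0)
      exact (diffAt_of_contDiffOn hψc hmem).hasFDerivAt.comp_hasDerivAt u hA
    have hint : IntervalIntegrable (fun u => pd i ψ (Function.update s i u))
        MeasureTheory.volume b a := by
      apply ContinuousOn.intervalIntegrable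
      refine hgcont.comp ?_ ?_
      · have hcu : Continuous (fun u : ℝ => Function.update s i u) := by
          rw [update_eq_affine s i]
          exact continuous_const.add (continuous_id.smul continuous_const)
        exact hcu.continuousOn
      · exact fun u hu => update_mem_negOrth hsmem i (huIcc u hu)
    have hFTC : ∫ u in b..a, pd i ψ (Function.update s i u)
        = ψ (Function.update s i a) - ψ (Function.update s i b) :=
      intervalIntegral.integral_eq_sub_of_hasDerivAt hg hint
    have hsub := intervalIntegral.integral_comp_mul_add
      (a := (0:ℝ)) (b := 1) (fun u => pd i ψ (Function.update s i u))
      (sub_ne_zero.2 hab) b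
    simp only [mul_zero, zero_add, mul_one, sub_add_cancel] at hsub
    show (ψ s - ψ (Function.update s i b)) / (a - b) - ω = Iw i (fun _ => 1) (pd i ψ) t - ω
    unfold Iw
    have h1 : (fun θ : ℝ => (1:ℝ) * pd i ψ (cCLM i θ t))
        = fun θ : ℝ => pd i ψ (Function.update s i ((a - b) * θ + b)) := by
      funext θ; rw [one_mul, hceq θ]
    rw [h1, hsub, hFTC, ← hsi, Function.update_eq_self]
    rw [smul_eq_mul, div_eq_inv_mul]

lemma clm_apply_eq_sum {n : ℕ} (L : (Fin n → ℝ) →L[ℝ] ℝ) (v : Fin n → ℝ) :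
    L v = ∑ j, v j * L (Pi.single j 1) := by
  have hv : v = ∑ j, v j • (Pi.single j 1 : Fin n → ℝ) := by
    funext j'
    rw [Finset.sum_apply]
    simp [Pi.single_apply]
  conv_lhs => rw [hv]
  rw [map_sum]
  congr 1
  funext j
  rw [_root_.map_smul, smul_eq_mul]

lemma le_omega_of_tendsto {n : ℕ} {g : (Fin n → ℝ) → ℝ}
    (hg : ContDiffOn ℝ (⊤ : ℕ∞) g (negOrth n))
    (hmono : ∀ j : Fin n, ∀ s ∈ negOrth n, 0 ≤ pd j g s)
    {ω : ℝ} (hω : Filter.Tendsto g (nhdsWithin 0 (negOrth n)) (nhds ω)) :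
    ∀ s ∈ negOrth n, g s ≤ ω := by
  intro s hs
  have hmem : ∀ r : ℝ, 0 < r → r • s ∈ negOrth n := by
    intro r hr j
    exact mul_neg_of_pos_of_neg hr (hs j)
  have hkey : ∀ r ∈ Set.Ioc (0:ℝ) 1, g s ≤ g (r • s) := by
    intro r hr
    have hder : ∀ u ∈ Set.Icc r 1,
        HasDerivAt (fun u : ℝ => g (u • s)) ((fderiv ℝ g (u • s)) s) u := by
      intro u hu
      have hu0 : 0 < u := lt_of_lt_of_le hr.1 hu.1
      have hA : HasDerivAt (fun u : ℝ => u • s) s u := by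
        simpa using (hasDerivAt_id u).smul_const s
      exact (diffAt_of_contDiffOn hg (hmem u hu0)).hasFDerivAt.comp_hasDerivAt u hA
    have hanti : AntitoneOn (fun u : ℝ => g (u • s)) (Set.Icc r 1) := by
      apply antitoneOn_of_deriv_nonpos (convex_Icc r 1)
      · exact fun u hu => (hder u hu).continuousAt.continuousWithinAt
      · intro u hu
        rw [interior_Icc] at hu
        exact ((hder u (Set.Ioo_subset_Icc_self hu)).differentiableAt).differentiableWithinAt
      · intro u hu
        rw [interior_Icc] at hu
        rw [(hder u (Set.Ioo_subset_Icc_self hu)).deriv]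
        have hu0 : 0 < u := lt_trans hr.1 hu.1
        rw [clm_apply_eq_sum]
        apply Finset.sum_nonpos
        intro j _
        exact mul_nonpos_of_nonpos_of_nonneg (le_of_lt (hs j)) (hmono j _ (hmem u hu0))
    have h1 := hanti (Set.mem_Icc.2 ⟨le_refl r, hr.2⟩) (Set.mem_Icc.2 ⟨hr.2, le_refl 1⟩) hr.2
    simpa using h1
  have htend : Filter.Tendsto (fun r : ℝ => g (r • s))
      (nhdsWithin 0 (Set.Ioi 0)) (nhds ω) := by
    apply hω.comp
    rw [tendsto_nhdsWithin_iff]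
    constructor
    · have h2 : Filter.Tendsto (fun r : ℝ => r • s) (nhds 0) (nhds ((0:ℝ) • s)) :=
        (continuous_id.smul continuous_const).tendsto 0
      simpa using h2.mono_left nhdsWithin_le_nhds
    · exact eventually_nhdsWithin_of_forall (fun r hr => hmem r hr)
  refine ge_of_tendsto htend ?_
  filter_upwards [Ioc_mem_nhdsGT_of_mem (Set.mem_Ico.2 ⟨le_refl 0, zero_lt_one⟩)] with r hr
  exact hkey r hr

lemma Iw_contDiffOn {n : ℕ} (i : Fin n) : ∀ m : ℕ, ∀ {w : ℝ → ℝ}, Continuous w →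
    ∀ {f : (Fin n → ℝ) → ℝ}, ContDiffOn ℝ (⊤ : ℕ∞) f (negOrth n) →
    ContDiffOn ℝ (m : WithTop ℕ∞) (Iw i w f) (negOrth (n+1))
  | 0, w, hw, f, hf => by
    refine contDiffOn_zero.2 ?_
    intro t ht
    exact (hasFDerivAt_Iw i hw hf ht).continuousAt.continuousWithinAt
  | m+1, w, hw, f, hf => by
    rw [Nat.cast_succ, contDiffOn_succ_iff_fderiv_of_isOpen (isOpen_negOrth (n+1))]
    refine ⟨fun t ht => (hasFDerivAt_Iw i hw hf ht).differentiableAt.differentiableWithinAt,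
      ?_, ?_⟩
    · intro h
      exact absurd h (WithTop.natCast_ne_top m)
    · have hfd : ∀ t ∈ negOrth (n+1), fderiv ℝ (Iw i w f) t
          = ∑ k, Iw i (fun θ => w θ * coefW i k θ) (pd (dir i k) f) t •
              (ContinuousLinearMap.proj k : (Fin (n+1) → ℝ) →L[ℝ] ℝ) := by
        intro t ht
        refine ContinuousLinearMap.ext fun v => ?_
        rw [clm_apply_eq_sum, ContinuousLinearMap.sum_apply]
        refine Finset.sum_congr rfl fun k _ => ?_
        rw [ContinuousLinearMap.smul_apply, ContinuousLinearMap.proj_apply, smul_eq_mul,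
          ← pd_Iw i k hw hf ht]
        unfold pd
        ring
      refine ContDiffOn.congr ?_ hfd
      refine ContDiffOn.sum fun k _ => ?_
      exact (Iw_contDiffOn i m (hw.mul (continuous_coefW i k)) (pd_contDiffOn hf _)).smul
        contDiffOn_const

/-- Lemma 1, first part: for `ψ ∈ T_n` with representing measure `μ`
and finite `ω_i = lim_{s→0⁻} ∂ψ/∂s_i`, the divided difference `φ_i` belongs
to `T_{n+1}`. -/
theorem divDiff_mem_Tn_succ {n : ℕ} (ψ : (Fin n → ℝ) → ℝ) (hψ : InT ψ)
    (μ : Measure (Fin n → ℝ)) (hsupp : μ (posSupp n)ᶜ = 0)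
    (hrep : ∀ s ∈ negOrth n,
      ψ s = ∫ v, (Real.exp (∑ j, s j * v j) - 1) ∂μ)
    (i : Fin n) (ω : ℝ)
    (hω : Tendsto (pd i ψ) (nhdsWithin 0 (negOrth n)) (nhds ω)) :
    InT (divDiff ψ i ω) := by
  obtain ⟨hψc, hψ0, hψa⟩ := hψ
  have hgc : ContDiffOn ℝ (⊤ : ℕ∞) (pd i ψ) (negOrth n) := pd_contDiffOn hψc i
  have habs : AbsMono (pd i ψ) := hψa i
  have hEq : ∀ t ∈ negOrth (n+1),
      divDiff ψ i ω t = Iw i (fun _ => 1) (pd i ψ) t - ω := divDiff_eq_Iw ψ hψc i ω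
  refine ⟨?_, ?_, ?_⟩
  · -- smoothness
    refine contDiffOn_infty.2 fun m => ?_
    exact ((Iw_contDiffOn i m continuous_const hgc).sub contDiffOn_const).congr hEq
  · -- nonpositivity
    intro t ht
    rw [hEq t ht]
    have hgle : ∀ s ∈ negOrth n, pd i ψ s ≤ ω :=
      le_omega_of_tendsto hgc (fun j s hs => habs [j] s hs) hω
    have h1 : Iw i (fun _ => 1) (pd i ψ) t ≤ ∫ _θ in (0:ℝ)..1, ω := by
      refine intervalIntegral.integral_mono_on zero_le_one
        (intervalIntegrable_integrand i hgc.continuousOn continuous_const ht)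
        intervalIntegrable_const (fun θ hθ => ?_)
      rw [one_mul]
      exact hgle _ (cCLM_mem_negOrth i hθ ht)
    rw [intervalIntegral.integral_const] at h1
    simp only [sub_zero, one_smul] at h1
    linarith
  · -- absolute monotonicity of partial derivatives
    intro k l t ht
    have h1 : iterPD l (pd k (divDiff ψ i ω)) t = iterPD (l ++ [k]) (divDiff ψ i ω) t := by
      rw [iterPD_append]
    have h2 : iterPD (l ++ [k]) (divDiff ψ i ω) t
        = iterPD (l ++ [k]) (fun t' => Iw i (fun _ => 1) (pd i ψ) t' - ω) t :=
      iterPD_congr_open (isOpen_negOrth (n+1)) _ hEq t ht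
    have h3 : iterPD (l ++ [k]) (fun t' => Iw i (fun _ => 1) (pd i ψ) t' - ω)
        = iterPD (l ++ [k]) (Iw i (fun _ => 1) (pd i ψ)) := by
      rw [iterPD_append, iterPD_append, pd_sub_const]
    have h4 := iterPD_Iw i (l ++ [k]) (w := fun _ => (1:ℝ)) continuous_const hgc t ht
    rw [h1, h2, h3, h4]
    refine Iw_nonneg i (fun θ hθ => ?_) (fun s hs => habs _ s hs) ht
    rw [one_mul]
    refine List.prod_nonneg ?_
    intro x hx
    obtain ⟨k', _, rfl⟩ := List.mem_map.1 hx
    exact coefW_nonneg i k' hθ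
end

section
/- Let T_i and T_{n+1} be commuting uniformly bounded C₀-semigroups on a Banach space X with generators A_i and A_{n+1}, and suppose A_i − A_{n+1} extends to a bounded operator. Then for every x in the common domain and every u_i > 0: (1/2)∫_{−u_i}^{u_i} T_i((u_i+w)/2) T_{n+1}((u_i−w)/2)(A_i − A_{n+1}) x dw = (T_i(u_i) − T_{n+1}(u_i)) x. -/
open MeasureTheory Filter Set

variable {X : Type*} [NormedAddCommGroup X] [NormedSpace ℂ X] [CompleteSpace X]

/-- A (not necessarily bounded) one-parameter `C₀`-semigroup on `X`. -/
def IsC0 (T : ℝ → X →L[ℂ] X) : Prop :=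
  T 0 = 1 ∧ (∀ s t : ℝ, 0 ≤ s → 0 ≤ t → T (s + t) = T s ∘L T t) ∧
    ∀ x : X, ContinuousOn (fun t => T t x) (Set.Ici 0)

/-- `A` (a partially defined linear map) is the infinitesimal generator of the
semigroup `T`: its domain is exactly the set of `x` for which the difference
quotient converges, and on the domain `A x` is its limit. -/
def IsGen (T : ℝ → X →L[ℂ] X) (A : X →ₗ.[ℂ] X) : Prop :=
  (∀ x : X, x ∈ A.domain ↔
      ∃ y : X, Tendsto (fun t : ℝ => (t : ℂ)⁻¹ • (T t x - x)) (nhdsWithin 0 (Set.Ioi 0)) (nhds y)) ∧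
    ∀ x : A.domain,
      Tendsto (fun t : ℝ => (t : ℂ)⁻¹ • (T t (x : X) - (x : X))) (nhdsWithin 0 (Set.Ioi 0)) (nhds (A x))

/-! The integrand is twice the derivative of `F w = T_i((u+w)/2) T_{n+1}((u-w)/2) x` on
`(-u, u)`, so the fundamental theorem of calculus gives `F u - F (-u) = T_i(u) x - T_{n+1}(u) x`.
To differentiate `F`: a bounded operator commuting with `T_i` preserves the domain of `A_i` and
commutes with `A_i`, so the product rule yields `½ T_i T_{n+1} (A_i - A_{n+1}) x`. Uniform
boundedness makes `(s, y) ↦ T(s) y` jointly continuous on `[0, ∞) × X`, which is what the product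
rule, the left derivative of an orbit and the continuity of the integrand all rest on. -/

open scoped Topology

section Semigroup

variable {E : Type*} [NormedAddCommGroup E] [NormedSpace ℂ E] {T : ℝ → E →L[ℂ] E} {M : ℝ}

theorem IsC0.tendsto_apply (hT : IsC0 T) (hM : ∀ t, 0 ≤ t → ‖T t‖ ≤ M)
    {ι : Type*} {l : Filter ι} {a : ι → ℝ} {t : ℝ} (ht : 0 ≤ t)
    (ha : Tendsto a l (𝓝 t)) (ha₀ : ∀ᶠ i in l, 0 ≤ a i)
    {y : ι → E} {z : E} (hy : Tendsto y l (𝓝 z)) :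
    Tendsto (fun i => T (a i) (y i)) l (𝓝 (T t z)) := by
  have h_orbit : Tendsto (fun i => T (a i) z) l (𝓝 (T t z)) :=
    Tendsto.comp (hT.2.2 z t ht) (tendsto_nhdsWithin_iff.mpr ⟨ha, ha₀⟩)
  have h_diff : Tendsto (fun i => T (a i) (y i) - T (a i) z) l (𝓝 0) := by
    have hbound : Tendsto (fun i => M * ‖y i - z‖) l (𝓝 0) := by
      simpa using (tendsto_iff_norm_sub_tendsto_zero.mp hy).const_mul M
    refine squeeze_zero_norm' ?_ hbound
    filter_upwards [ha₀] with i hi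
    calc ‖T (a i) (y i) - T (a i) z‖ = ‖T (a i) (y i - z)‖ := by rw [map_sub]
      _ ≤ ‖T (a i)‖ * ‖y i - z‖ := (T (a i)).le_opNorm _
      _ ≤ M * ‖y i - z‖ := by gcongr; exact hM _ hi
  simpa using h_diff.add h_orbit

theorem IsC0.continuousOn_apply (hT : IsC0 T) (hM : ∀ t, 0 ≤ t → ‖T t‖ ≤ M)
    {s : Set ℝ} {a : ℝ → ℝ} {v : ℝ → E} (ha : ContinuousOn a s) (hv : ContinuousOn v s)
    (ha₀ : ∀ w ∈ s, 0 ≤ a w) :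
    ContinuousOn (fun w => T (a w) (v w)) s := fun w hw =>
  hT.tendsto_apply hM (ha₀ w hw) (ha w hw) (eventually_mem_nhdsWithin.mono ha₀) (hv w hw)

theorem IsGen.tendsto_slope {A : E →ₗ.[ℂ] E} (hA : IsGen T A) (x : A.domain) :
    Tendsto (fun t : ℝ => t⁻¹ • (T t x - x)) (𝓝[>] 0) (𝓝 (A x)) := by
  refine (hA.2 x).congr fun t => ?_
  rw [← Complex.coe_smul, Complex.ofReal_inv]

theorem IsGen.hasDerivAt_apply (hT : IsC0 T) (hM : ∀ t, 0 ≤ t → ‖T t‖ ≤ M)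
    {A : E →ₗ.[ℂ] E} (hA : IsGen T A) (x : A.domain) {t : ℝ} (ht : 0 < t) :
    HasDerivAt (fun s => T s x) (T t (A x)) t := by
  rw [hasDerivAt_iff_tendsto_slope_zero, ← nhdsLT_sup_nhdsGT, tendsto_sup]
  constructor
  · have h_neg : Tendsto (fun h : ℝ => -h) (𝓝[<] 0) (𝓝[>] 0) :=
      tendsto_nhdsWithin_iff.mpr ⟨(continuous_neg.tendsto' 0 0 neg_zero).mono_left
        nhdsWithin_le_nhds, eventually_mem_nhdsWithin.mono fun _ hh => mem_Ioi.mpr (neg_pos.mpr hh)⟩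
    have h_shift : Tendsto (fun h : ℝ => t + h) (𝓝[<] 0) (𝓝 t) := by
      simpa using ((continuous_const_add t).tendsto 0).mono_left nhdsWithin_le_nhds
    have h_pos : ∀ᶠ h in 𝓝[<] (0 : ℝ), 0 ≤ t + h := h_shift.eventually (eventually_ge_nhds ht)
    have h_lim := hT.tendsto_apply hM ht.le h_shift h_pos ((hA.tendsto_slope x).comp h_neg)
    refine h_lim.congr' ?_
    filter_upwards [h_pos, eventually_mem_nhdsWithin] with h hth hh
    have h_split : T t x = T (t + h) (T (-h) x) := by
      rw [← ContinuousLinearMap.comp_apply, ← hT.2.1 _ _ hth (neg_nonneg.mpr (le_of_lt hh))]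
      ring_nf
    simp only [Function.comp_apply, h_split, ContinuousLinearMap.map_smul_of_tower, map_sub,
      inv_neg, neg_smul, ← smul_neg, neg_sub]
  · refine (((T t).continuous.tendsto _).comp (hA.tendsto_slope x)).congr' ?_
    filter_upwards [eventually_mem_nhdsWithin] with h hh
    have h_split : T (t + h) x = T t (T h x) := by
      rw [hT.2.1 _ _ ht.le (le_of_lt hh)]; rfl
    simp only [Function.comp_apply, h_split, ContinuousLinearMap.map_smul_of_tower, map_sub]

theorem IsGen.exists_apply_eq_of_commute {A : E →ₗ.[ℂ] E} (hA : IsGen T A) (S : E →L[ℂ] E)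
    (hS : ∀ t, T t ∘L S = S ∘L T t) (x : A.domain) :
    ∃ h : S x ∈ A.domain, A ⟨S x, h⟩ = S (A x) := by
  have h_lim : Tendsto (fun t : ℝ => (t : ℂ)⁻¹ • (T t (S x) - S x)) (𝓝[>] 0) (𝓝 (S (A x))) := by
    refine (((S.continuous.tendsto _).comp (hA.2 x))).congr fun t => ?_
    rw [Function.comp_apply, map_smul, map_sub, ← ContinuousLinearMap.comp_apply, ← hS t]
    rfl
  have hmem : S x ∈ A.domain := (hA.1 _).mpr ⟨_, h_lim⟩
  exact ⟨hmem, tendsto_nhds_unique (hA.2 ⟨_, hmem⟩) h_lim⟩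

theorem IsC0.hasDerivAt_apply_comp (hT : IsC0 T) (hM : ∀ t, 0 ≤ t → ‖T t‖ ≤ M)
    {a : ℝ → ℝ} {a' : ℝ} {v : ℝ → E} {v' d : E} {w : ℝ}
    (ha : HasDerivAt a a' w) (ha₀ : 0 < a w) (hv : HasDerivAt v v' w)
    (hd : HasDerivAt (fun s => T s (v w)) d (a w)) :
    HasDerivAt (fun w => T (a w) (v w)) (a' • d + T (a w) v') w := by
  have h_fixed : HasDerivAt (fun w' => T (a w') (v w)) (a' • d) w := hd.scomp w ha
  have h_moving : HasDerivAt (fun w' => T (a w') (v w' - v w)) (T (a w) v') w := by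
    rw [hasDerivAt_iff_tendsto_slope]
    have ha_lim : Tendsto a (𝓝[≠] w) (𝓝 (a w)) := ha.continuousAt.tendsto.mono_left
      nhdsWithin_le_nhds
    refine (hT.tendsto_apply hM ha₀.le ha_lim
      (ha_lim.eventually (eventually_ge_nhds ha₀)) (hasDerivAt_iff_tendsto_slope.mp hv)).congr
      fun w' => ?_
    simp only [slope_def_module, sub_self, map_zero, sub_zero,
      ContinuousLinearMap.map_smul_of_tower]
  convert h_moving.add h_fixed using 1
  · ext w'
    simp only [Pi.add_apply, map_sub, sub_add_cancel]
  · exact add_comm _ _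

end Semigroup

theorem hasDerivAt_apply_apply_of_commute {E : Type*} [NormedAddCommGroup E] [NormedSpace ℂ E]
    {S T : ℝ → E →L[ℂ] E} (hS : IsC0 S) (hT : IsC0 T) {M N : ℝ}
    (hSM : ∀ t, 0 ≤ t → ‖S t‖ ≤ M) (hTN : ∀ t, 0 ≤ t → ‖T t‖ ≤ N)
    (hcomm : ∀ s t : ℝ, S s ∘L T t = T t ∘L S s)
    {A B : E →ₗ.[ℂ] E} (hA : IsGen S A) (hB : IsGen T B)
    {x : E} (hxA : x ∈ A.domain) (hxB : x ∈ B.domain)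
    {a b : ℝ → ℝ} {a' b' w : ℝ} (ha : HasDerivAt a a' w) (hb : HasDerivAt b b' w)
    (ha₀ : 0 < a w) (hb₀ : 0 < b w) :
    HasDerivAt (fun w => S (a w) (T (b w) x))
      (S (a w) (T (b w) (a' • A ⟨x, hxA⟩ + b' • B ⟨x, hxB⟩))) w := by
  obtain ⟨hmem, hAT⟩ := hA.exists_apply_eq_of_commute (T (b w)) (hcomm · (b w)) ⟨x, hxA⟩
  have hv := (hB.hasDerivAt_apply hT hTN ⟨x, hxB⟩ hb₀).scomp w hb
  have hd := hA.hasDerivAt_apply hS hSM ⟨_, hmem⟩ ha₀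
  rw [hAT] at hd
  convert hS.hasDerivAt_apply_comp hSM ha ha₀ hv hd using 1
  · rfl
  simp only [map_add, ContinuousLinearMap.map_smul_of_tower]

/-- for commuting uniformly bounded `C₀`-semigroups `T_i`, `T_{n+1}`
with generators `A_i`, `A_{n+1}` whose difference extends to a bounded operator `C`,
`(1/2)∫_{−u}^{u} T_i((u+w)/2) T_{n+1}((u−w)/2) C x dw = T_i(u)x − T_{n+1}(u)x`
for `x` in the common domain and `u > 0`. -/
theorem semigroup_difference_integral
    (Ti Tn : ℝ → X →L[ℂ] X) (hTi : IsC0 Ti) (hTn : IsC0 Tn)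
    (M : ℝ) (hM : ∀ t : ℝ, 0 ≤ t → ‖Ti t‖ ≤ M ∧ ‖Tn t‖ ≤ M)
    (hcomm : ∀ s t : ℝ, Ti s ∘L Tn t = Tn t ∘L Ti s)
    (Ai An : X →ₗ.[ℂ] X) (hAi : IsGen Ti Ai) (hAn : IsGen Tn An)
    (C : X →L[ℂ] X)
    (hC : ∀ x (hxi : x ∈ Ai.domain) (hxn : x ∈ An.domain),
      C x = Ai ⟨x, hxi⟩ - An ⟨x, hxn⟩)
    (x : X) (hxi : x ∈ Ai.domain) (hxn : x ∈ An.domain)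
    (u : ℝ) (hu : 0 < u) :
    ((2 : ℂ)⁻¹) • (∫ w in (-u)..u, Ti ((u + w) / 2) (Tn ((u - w) / 2) (C x))) =
      Ti u x - Tn u x := by
  have hMi : ∀ t, 0 ≤ t → ‖Ti t‖ ≤ M := fun t ht => (hM t ht).1
  have hMn : ∀ t, 0 ≤ t → ‖Tn t‖ ≤ M := fun t ht => (hM t ht).2
  have hcont (y : X) :
      ContinuousOn (fun w => Ti ((u + w) / 2) (Tn ((u - w) / 2) y)) (Icc (-u) u) :=
    hTi.continuousOn_apply hMi (by fun_prop)
      (hTn.continuousOn_apply hMn (by fun_prop) continuousOn_const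
        fun w hw => by linarith [hw.2])
      fun w hw => by linarith [hw.1]
  have hderiv : ∀ w ∈ Ioo (-u) u, HasDerivAt (fun w => Ti ((u + w) / 2) (Tn ((u - w) / 2) x))
      ((2 : ℝ)⁻¹ • Ti ((u + w) / 2) (Tn ((u - w) / 2) (C x))) w := by
    rintro w ⟨hw₁, hw₂⟩
    have ha : HasDerivAt (fun w : ℝ => (u + w) / 2) (1 / 2) w :=
      ((hasDerivAt_id' w).const_add u).div_const 2
    have hb : HasDerivAt (fun w : ℝ => (u - w) / 2) (-1 / 2) w :=
      ((hasDerivAt_id' w).const_sub u).div_const 2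
    refine (hasDerivAt_apply_apply_of_commute hTi hTn hMi hMn hcomm hAi hAn hxi hxn ha hb
      (by linarith) (by linarith)).congr_deriv ?_
    rw [hC x hxi hxn, ← ContinuousLinearMap.map_smul_of_tower,
      ← ContinuousLinearMap.map_smul_of_tower]
    congr 2
    module
  have hFTC := intervalIntegral.integral_eq_sub_of_hasDerivAt_of_le (by linarith) (hcont x) hderiv
    (((hcont (C x)).const_smul _).intervalIntegrable_of_Icc (by linarith))
  rw [intervalIntegral.integral_smul] at hFTC
  rw [show (2 : ℂ)⁻¹ = (((2 : ℝ)⁻¹ : ℝ) : ℂ) by norm_num, Complex.coe_smul, hFTC]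
  simp [hTi.1, hTn.1]
end

section
/- Let ψ ∈ T_n with finite ω_i = ∂ψ/∂s_i|_{s=0⁻}, and A commuting generators as usual. Then for x in the common domain, φ_i(A₁,…,A_n,A_i)x = (∂ψ(A)/∂s_i) x − ω_i x, where φ_i ∈ T_{n+1} is the divided difference and ∂ψ(A)/∂s_i = ∫ T_A(v) v_i dμ(v). -/
open MeasureTheory Filter Set

variable {X : Type*} [NormedAddCommGroup X] [NormedSpace ℂ X] [CompleteSpace X]

/-- The `n`-parameter semigroup `T_A(v) = T_{A₁}(v₁)⋯T_{A_n}(v_n)`. -/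
noncomputable def TProd {X : Type*} [NormedAddCommGroup X] [NormedSpace ℂ X]
    {n : ℕ} (T : Fin n → ℝ → X →L[ℂ] X) (v : Fin n → ℝ) : X →L[ℂ] X :=
  ((List.finRange n).map (fun j => T j (v j))).prod


/-- The region `Ω_i = {(v,w) : v ∈ ℝ₊ⁿ\{0}, w ∈ [−v_i, v_i]}`. -/
def OmegaSet (n : ℕ) (i : Fin n) : Set ((Fin n → ℝ) × ℝ) :=
  {p | p.1 ∈ posSupp n ∧ p.2 ∈ Set.Icc (-(p.1 i)) (p.1 i)}

/-- The change of variables `u_j = v_j (j ≠ i, n+1)`, `u_i = (v_i + w)/2`,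
`u_{n+1} = (v_i − w)/2`. -/
noncomputable def chg {n : ℕ} (i : Fin n) (p : (Fin n → ℝ) × ℝ) : Fin (n + 1) → ℝ :=
  Fin.lastCases ((p.1 i - p.2) / 2)
    (fun k => if k = i then (p.1 i + p.2) / 2 else p.1 k)

/-- The measure `μ_i`: the image of `(1/2) dμ(v) dw` on `Ω_i` under `chg i`. -/
noncomputable def muI {n : ℕ} (μ : Measure (Fin n → ℝ)) (i : Fin n) :
    Measure (Fin (n + 1) → ℝ) :=
  Measure.map (chg i) ((2 : ENNReal)⁻¹ • (μ.prod volume).restrict (OmegaSet n i))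



/-!
The integrand against `μ_i` depends on `u` only through `mergeLast i u`, and
`mergeLast i (chg i (v, w)) = v`. Hence `μ_i` pushed forward by `mergeLast i` is the image of
`½ dμ(v) dw` on `Ω_i` under `(v, w) ↦ v`; integrating out `w ∈ [-v_i, v_i]` leaves the density
`½ · 2 v_i = v_i` with respect to `μ`. The uniform bound `‖T_A(v)‖ ≤ Mⁿ` makes `v_i T_A(v) x`
integrable, so the integral of `v_i (T_A(v) x - x)` splits into the two terms of the right-hand side.
-/

section ListProd

variable {α ι 𝕜 E : Type*} [TopologicalSpace α] [NontriviallyNormedField 𝕜]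
  [NormedAddCommGroup E] [NormedSpace 𝕜 E]

/-- `S t (f t) - S t₀ (f t₀) = S t (f t - f t₀) + (S t - S t₀) (f t₀)`, where the first term is
bounded by `M ‖f t - f t₀‖`. -/
theorem ContinuousOn.clm_apply_of_norm_le {S : α → E →L[𝕜] E} {f : α → E} {s : Set α} {M : ℝ}
    (hS : ∀ y, ContinuousOn (fun t => S t y) s) (hM : ∀ t ∈ s, ‖S t‖ ≤ M)
    (hf : ContinuousOn f s) : ContinuousOn (fun t => S t (f t)) s := by
  intro t₀ ht₀
  have hsmall : Tendsto (fun t => S t (f t - f t₀)) (nhdsWithin t₀ s) (nhds 0) := by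
    refine squeeze_zero_norm' (a := fun t => M * ‖f t - f t₀‖) ?_ ?_
    · filter_upwards [self_mem_nhdsWithin] with t ht
      exact (S t).le_of_opNorm_le (hM t ht) _
    · have hdist := ((hf t₀ ht₀).sub (continuousWithinAt_const (b := f t₀))).norm.const_mul M
      simpa using hdist.tendsto
  have hsum := hsmall.add (hS (f t₀) t₀ ht₀)
  simp only [map_sub, sub_add_cancel, zero_add] at hsum
  exact hsum

theorem continuousOn_list_prod_apply {S : ι → α → E →L[𝕜] E} {s : Set α} {M : ℝ}
    (hS : ∀ j y, ContinuousOn (fun t => S j t y) s) (hM : ∀ j, ∀ t ∈ s, ‖S j t‖ ≤ M)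
    (l : List ι) (x : E) : ContinuousOn (fun t => (l.map fun j => S j t).prod x) s := by
  induction l with
  | nil => exact continuousOn_const
  | cons j l ih =>
    simpa only [List.map_cons, List.prod_cons, mul_apply_eq_comp] using
      ContinuousOn.clm_apply_of_norm_le (hS j) (hM j) ih

theorem norm_list_prod_apply_le {L : List (E →L[𝕜] E)} {M : ℝ}
    (hM : ∀ S ∈ L, ‖S‖ ≤ M) (x : E) : ‖L.prod x‖ ≤ M ^ L.length * ‖x‖ := by
  induction L with
  | nil => simp
  | cons S L ih =>
    have hS : ‖S‖ ≤ M := hM S List.mem_cons_self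
    calc ‖S (L.prod x)‖ ≤ M * (M ^ L.length * ‖x‖) :=
          S.le_of_opNorm_le_of_le hS (ih fun S' hS' => hM S' (List.mem_cons_of_mem S hS'))
      _ = M ^ (L.length + 1) * ‖x‖ := by ring

end ListProd

section TProd

variable {E : Type*} [NormedAddCommGroup E] [NormedSpace ℂ E] {n : ℕ}
  {T : Fin n → ℝ → E →L[ℂ] E} {M : ℝ}

theorem continuousOn_TProd_apply (hT : ∀ j y, ContinuousOn (fun t => T j t y) (Ici 0))
    (hM : ∀ j (t : ℝ), 0 ≤ t → ‖T j t‖ ≤ M) (x : E) :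
    ContinuousOn (fun v => TProd T v x) (Ici 0) :=
  continuousOn_list_prod_apply
    (fun j y => (hT j y).comp (continuous_apply j).continuousOn
      fun v (hv : v ∈ Ici 0) => hv j)
    (fun j v (hv : v ∈ Ici 0) => hM j (v j) (hv j)) _ x

theorem norm_TProd_apply_le (hM : ∀ j (t : ℝ), 0 ≤ t → ‖T j t‖ ≤ M) {v : Fin n → ℝ}
    (hv : 0 ≤ v) (x : E) : ‖TProd T v x‖ ≤ M ^ n * ‖x‖ := by
  simpa [TProd] using norm_list_prod_apply_le (M := M)
    (L := (List.finRange n).map fun j => T j (v j))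
    (by simpa using fun j => hM j (v j) (hv j)) x

end TProd

section ChangeOfVariables

variable {n : ℕ}

/-- `u ↦ (u₁, …, u_i + u_{n+1}, …, u_n)`, the argument of `T_A` in `φ_i(A₁,…,A_n,A_i)`. -/
def mergeLast (i : Fin n) (u : Fin (n + 1) → ℝ) : Fin n → ℝ :=
  fun j => if j = i then u j.castSucc + u (Fin.last n) else u j.castSucc

theorem mergeLast_chg (i : Fin n) (p : (Fin n → ℝ) × ℝ) : mergeLast i (chg i p) = p.1 := by
  funext j
  by_cases hj : j = i
  · subst hj
    simp only [mergeLast, ↓reduceIte, chg, Fin.lastCases_castSucc, Fin.lastCases_last]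
    ring
  · simp [mergeLast, chg, hj]

theorem measurable_mergeLast (i : Fin n) : Measurable (mergeLast i) := by
  refine (continuous_pi fun j => ?_).measurable
  unfold mergeLast
  split_ifs <;> fun_prop

theorem measurable_chg (i : Fin n) : Measurable (chg i) := by
  refine (continuous_pi fun a => ?_).measurable
  induction a using Fin.lastCases with
  | last => simp only [chg, Fin.lastCases_last]; fun_prop
  | cast k =>
    simp only [chg, Fin.lastCases_castSucc]
    split_ifs <;> fun_prop

theorem measurableSet_posSupp : MeasurableSet (posSupp n) :=
  measurableSet_Ici.diff (measurableSet_singleton 0)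

theorem measurableSet_omegaSet (i : Fin n) : MeasurableSet (OmegaSet n i) :=
  (measurable_fst measurableSet_posSupp).inter
    ((measurableSet_le (by fun_prop) measurable_snd).inter
      (measurableSet_le measurable_snd (by fun_prop)))

theorem map_fst_restrict_omegaSet (μ : Measure (Fin n → ℝ)) (i : Fin n) :
    ((μ.prod volume).restrict (OmegaSet n i)).map Prod.fst
      = (μ.restrict (posSupp n)).withDensity fun v => ENNReal.ofReal (2 * v i) := by
  ext A hA
  have hApos := hA.inter measurableSet_posSupp
  rw [Measure.map_apply measurable_fst hA,
    Measure.restrict_apply (measurable_fst hA),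
    Measure.prod_apply ((measurable_fst hA).inter (measurableSet_omegaSet i)),
    withDensity_apply _ hA, Measure.restrict_restrict hA, ← lintegral_indicator hApos]
  refine lintegral_congr fun v => ?_
  by_cases hv : v ∈ A ∩ posSupp n
  · have hslice : Prod.mk v ⁻¹' (Prod.fst ⁻¹' A ∩ OmegaSet n i) = Icc (-(v i)) (v i) := by
      ext w; simp [OmegaSet, hv.1, hv.2]
    rw [indicator_of_mem hv, hslice, Real.volume_Icc]
    ring_nf
  · have hslice : Prod.mk v ⁻¹' (Prod.fst ⁻¹' A ∩ OmegaSet n i) = ∅ := by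
      ext w
      simp only [mem_preimage, mem_inter_iff, OmegaSet, mem_ofPred_eq] at hv ⊢
      tauto
    rw [indicator_of_notMem hv, hslice, measure_empty]

theorem map_mergeLast_muI (μ : Measure (Fin n → ℝ)) (i : Fin n) :
    (muI μ i).map (mergeLast i)
      = (μ.restrict (posSupp n)).withDensity fun v => ENNReal.ofReal (v i) := by
  have hcomp : mergeLast i ∘ chg i = Prod.fst := funext (mergeLast_chg i)
  rw [muI, Measure.map_map (measurable_mergeLast i) (measurable_chg i), hcomp,
    Measure.map_smul, map_fst_restrict_omegaSet, ← withDensity_smul' _ _ (by simp)]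
  congr 1
  funext v
  rw [Pi.smul_apply, smul_eq_mul, ENNReal.ofReal_mul zero_le_two, ENNReal.ofReal_ofNat,
    ← mul_assoc, ENNReal.inv_mul_cancel two_ne_zero ENNReal.ofNat_ne_top, one_mul]

theorem integral_comp_mergeLast_muI {E : Type*} [NormedAddCommGroup E] [NormedSpace ℝ E]
    (μ : Measure (Fin n → ℝ)) (i : Fin n) {g : (Fin n → ℝ) → E}
    (hg : AEStronglyMeasurable g (μ.restrict (posSupp n))) :
    ∫ u, g (mergeLast i u) ∂muI μ i = ∫ v in posSupp n, v i • g v ∂μ := by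
  have hg' : AEStronglyMeasurable g ((muI μ i).map (mergeLast i)) := by
    rw [map_mergeLast_muI]
    exact hg.mono_ac (withDensity_absolutelyContinuous _ _)
  rw [← integral_map (measurable_mergeLast i).aemeasurable hg', map_mergeLast_muI]
  change ∫ v, g v ∂(μ.restrict _).withDensity (fun v => ((v i).toNNReal : ENNReal)) = _
  rw [integral_withDensity_eq_integral_smul (by fun_prop)]
  refine setIntegral_congr_fun measurableSet_posSupp fun v hv => ?_
  rw [NNReal.smul_def, Real.coe_toNNReal _ (hv.1 i)]

end ChangeOfVariables

theorem divided_difference_at_A_eq_partial_general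
    {n : ℕ} (μ : Measure (Fin n → ℝ)) (hsupp : μ (posSupp n)ᶜ = 0)
    (i : Fin n) (hωfin : Integrable (fun v => v i) μ)
    (T : Fin n → ℝ → X →L[ℂ] X) (hT : ∀ j, IsC0 (T j))
    (M : ℝ) (hM : ∀ j (t : ℝ), 0 ≤ t → ‖T j t‖ ≤ M)
    (x : X) :
    ∫ u : Fin (n + 1) → ℝ,
        (TProd (fun j : Fin n => fun r : ℝ => T j r)
          (fun j : Fin n =>
            if j = i then u j.castSucc + u (Fin.last n) else u j.castSucc) x - x)
        ∂(muI μ i)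
      = (∫ v : Fin n → ℝ, ((v i : ℂ)) • (TProd T v x) ∂μ)
        - ((∫ v, v i ∂μ : ℝ) : ℂ) • x := by
  have hpos : ∀ᵐ v ∂μ, v ∈ posSupp n := hsupp
  have hμ : μ.restrict (posSupp n) = μ := Measure.restrict_eq_self_of_ae_mem hpos
  have hmeas : AEStronglyMeasurable (fun v => TProd T v x) μ := by
    rw [← hμ]
    exact ((continuousOn_TProd_apply (fun j => (hT j).2.2) hM x).mono fun v hv => hv.1)
      |>.aestronglyMeasurable measurableSet_posSupp
  have hint : Integrable (fun v => v i • TProd T v x) μ :=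
    hωfin.smul_bdd (M ^ n * ‖x‖) hmeas
      (hpos.mono fun v hv => norm_TProd_apply_le hM hv.1 x)
  calc _ = ∫ v in posSupp n, v i • (TProd T v x - x) ∂μ :=
        integral_comp_mergeLast_muI μ i (by rw [hμ]; exact hmeas.sub aestronglyMeasurable_const)
    _ = (∫ v, v i • TProd T v x ∂μ) - ∫ v, v i • x ∂μ := by
        simp only [hμ, smul_sub]
        exact integral_sub hint (hωfin.smul_const x)
    _ = _ := by simp only [Complex.coe_smul, integral_smul_const]

/-- `φ_i(A₁,…,A_n,A_i)x = (∂ψ(A)/∂s_i)x − ω_i x` on the common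
domain, where `φ_i(A₁,…,A_n,A_i)x` is given by its defining integral against `μ_i`
(with `T_i` evaluated at `u_i + u_{n+1}`) and `∂ψ(A)/∂s_i = ∫ T_A(v) v_i dμ(v)`. -/
theorem divided_difference_at_A_eq_partial
    {n : ℕ} (μ : Measure (Fin n → ℝ)) (hsupp : μ (posSupp n)ᶜ = 0)
    (i : Fin n) (hωfin : Integrable (fun v => v i) μ)
    (T : Fin n → ℝ → X →L[ℂ] X) (hT : ∀ j, IsC0 (T j))
    (M : ℝ) (hM : ∀ j (t : ℝ), 0 ≤ t → ‖T j t‖ ≤ M)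
    (hcomm : ∀ j k (s t : ℝ), T j s ∘L T k t = T k t ∘L T j s)
    (A : Fin n → X →ₗ.[ℂ] X) (hA : ∀ j, IsGen (T j) (A j))
    (x : X) (hx : ∀ j, x ∈ (A j).domain) :
    ∫ u : Fin (n + 1) → ℝ,
        (TProd (fun j : Fin n => fun r : ℝ => T j r)
          (fun j : Fin n =>
            if j = i then u j.castSucc + u (Fin.last n) else u j.castSucc) x - x)
        ∂(muI μ i)
      = (∫ v : Fin n → ℝ, ((v i : ℂ)) • (TProd T v x) ∂μ)
        - ((∫ v, v i ∂μ : ℝ) : ℂ) • x :=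
  divided_difference_at_A_eq_partial_general μ hsupp i hωfin T hT M hM x
end

section
/- For scalar functions: if ψ ∈ T_n satisfies ψ(s) = ∫_{ℝ₊ⁿ\{0}}(e^{s·v}−1)dμ(v) and the (2m+1)-st mixed derivative ∂^{2m+1}ψ (multi-index 2m+1 = (2m₁+1,…,2m_n+1)) has a finite limit at s = 0⁻, then ∫_{ℝ₊ⁿ\{0}} ∏_{i=1}^n v_i^{2m_i+1} dμ(v) < ∞. -/
open MeasureTheory Filter Set

namespace Aux

noncomputable def gfun {n : ℕ} (a : Fin n → ℕ) (s v : Fin n → ℝ) : ℝ :=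
  (∏ i, v i ^ a i) * Real.exp (∑ j, s j * v j)

noncomputable def Gfun {n : ℕ} (a : Fin n → ℕ) (s v : Fin n → ℝ) : ℝ :=
  gfun a s v - (if a = 0 then 1 else 0)

noncomputable def lmap {n : ℕ} (v : Fin n → ℝ) : (Fin n → ℝ) →L[ℝ] ℝ :=
  ∑ j, v j • ContinuousLinearMap.proj j

lemma lmap_apply {n : ℕ} (v t : Fin n → ℝ) : lmap v t = ∑ j, t j * v j := by
  simp [lmap, mul_comm]

lemma continuous_gfun {n : ℕ} (a : Fin n → ℕ) (s : Fin n → ℝ) :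
    Continuous (fun v => gfun a s v) := by
  unfold gfun
  exact (continuous_finset_prod _ fun i _ => (continuous_apply i).pow _).mul
    (Real.continuous_exp.comp (continuous_finset_sum _ fun j _ =>
      continuous_const.mul (continuous_apply j)))

lemma continuous_Gfun {n : ℕ} (a : Fin n → ℕ) (s : Fin n → ℝ) :
    Continuous (fun v => Gfun a s v) := (continuous_gfun a s).sub continuous_const

lemma gfun_nonneg {n : ℕ} (a : Fin n → ℕ) (s : Fin n → ℝ) {v : Fin n → ℝ}
    (hv : ∀ j, 0 ≤ v j) : 0 ≤ gfun a s v :=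
  mul_nonneg (Finset.prod_nonneg fun i _ => pow_nonneg (hv i) _) (Real.exp_pos _).le

/-- scalar bound : t^a e^{st} ≤ a! * (2/(-s))^a for s<0, t≥0 -/
lemma scalar_bound {a : ℕ} {s t : ℝ} (hs : s < 0) (ht : 0 ≤ t) :
    t ^ a * Real.exp (s * t) ≤ (a.factorial : ℝ) * (-s / 2)⁻¹ ^ a := by
  have hε : (0:ℝ) < -s / 2 := by linarith
  have h1 : ((-s / 2) * t) ^ a / (a.factorial : ℝ) ≤ Real.exp ((-s / 2) * t) :=
    Real.pow_div_factorial_le_exp _ (by positivity) a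
  have hfac : (0:ℝ) < (a.factorial : ℝ) := by positivity
  rw [div_le_iff₀ hfac, mul_pow] at h1
  have h3 : (-s / 2)⁻¹ ^ a * ((-s / 2) ^ a * t ^ a) ≤
      (-s / 2)⁻¹ ^ a * (Real.exp ((-s / 2) * t) * (a.factorial : ℝ)) :=
    mul_le_mul_of_nonneg_left h1 (pow_nonneg (inv_nonneg.2 hε.le) _)
  rw [← mul_assoc, ← mul_pow, inv_mul_cancel₀ hε.ne', one_pow, one_mul] at h3
  have h4 : t ^ a * Real.exp (s * t) ≤
      ((-s / 2)⁻¹ ^ a * (Real.exp ((-s / 2) * t) * (a.factorial : ℝ))) * Real.exp (s * t) :=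
    mul_le_mul_of_nonneg_right h3 (Real.exp_pos _).le
  have h5 : ((-s / 2)⁻¹ ^ a * (Real.exp ((-s / 2) * t) * (a.factorial : ℝ))) * Real.exp (s * t)
      = (a.factorial : ℝ) * (-s / 2)⁻¹ ^ a * Real.exp ((-s / 2) * t + s * t) := by
    rw [Real.exp_add]; ring
  have h6 : Real.exp ((-s / 2) * t + s * t) ≤ 1 :=
    Real.exp_le_one_iff.2 (by nlinarith)
  calc t ^ a * Real.exp (s * t)
      ≤ (a.factorial : ℝ) * (-s / 2)⁻¹ ^ a * Real.exp ((-s / 2) * t + s * t) := by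
        rw [← h5]; exact h4
    _ ≤ (a.factorial : ℝ) * (-s / 2)⁻¹ ^ a * 1 :=
        mul_le_mul_of_nonneg_left h6 (by positivity)
    _ = (a.factorial : ℝ) * (-s / 2)⁻¹ ^ a := mul_one _

/-- 1 - e^{st} ≥ (1-e^s) min(1,t) for s<0, t≥0. -/
lemma one_sub_exp_ge {s t : ℝ} (hs : s < 0) (ht : 0 ≤ t) :
    (1 - Real.exp s) * min 1 t ≤ 1 - Real.exp (s * t) := by
  rcases le_or_gt 1 t with h | h
  · have : Real.exp (s * t) ≤ Real.exp s := Real.exp_le_exp.2 (by nlinarith)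
    rw [min_eq_left h]
    linarith
  · rw [min_eq_right h.le]
    have hc := convexOn_exp.2 (mem_univ (0:ℝ)) (mem_univ s) (by linarith : (0:ℝ) ≤ 1 - t) ht
      (by ring : (1 - t) + t = 1)
    simp only [smul_eq_mul, mul_zero, zero_add, Real.exp_zero, mul_one] at hc
    have h2 : Real.exp (t * s) ≤ (1 - t) + t * Real.exp s := hc
    rw [mul_comm] at h2
    nlinarith


lemma ae_posSupp {n : ℕ} {μ : Measure (Fin n → ℝ)} (hsupp : μ (posSupp n)ᶜ = 0) :
    ∀ᵐ v ∂μ, v ∈ posSupp n := by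
  rw [MeasureTheory.ae_iff]
  exact hsupp

lemma gfun_le {n : ℕ} {a : Fin n → ℕ} {s : Fin n → ℝ} (hs : s ∈ negOrth n)
    (j₀ : Fin n) (hj₀ : a j₀ ≠ 0) {v : Fin n → ℝ} (hv : ∀ j, 0 ≤ v j) :
    gfun a s v ≤ (max (∏ i, ((a i).factorial : ℝ) * (-(s i) / 2)⁻¹ ^ (a i))
        (∏ i ∈ Finset.univ.erase j₀, ((a i).factorial : ℝ) * (-(s i) / 2)⁻¹ ^ (a i))
        / (1 - Real.exp (s j₀))) * (1 - Real.exp (∑ j, s j * v j)) := by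
  set M : Fin n → ℝ := fun i => ((a i).factorial : ℝ) * (-(s i) / 2)⁻¹ ^ (a i) with hM
  have hMnn : ∀ i, 0 ≤ M i := by
    intro i
    have : s i < 0 := hs i
    have : (0:ℝ) < -s i / 2 := by linarith
    positivity
  have hfac : ∀ i, v i ^ a i * Real.exp (s i * v i) ≤ M i := fun i =>
    scalar_bound (hs i) (hv i)
  have hfacnn : ∀ i, 0 ≤ v i ^ a i * Real.exp (s i * v i) := fun i =>
    mul_nonneg (pow_nonneg (hv i) _) (Real.exp_pos _).le
  have hc : 0 < 1 - Real.exp (s j₀) := by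
    have := Real.exp_lt_one_iff.2 (hs j₀)
    linarith
  set c := 1 - Real.exp (s j₀) with hcdef
  set P := ∏ i, M i with hP
  set P' := ∏ i ∈ Finset.univ.erase j₀, M i with hP'
  have hPnn : 0 ≤ P := Finset.prod_nonneg fun i _ => hMnn i
  have hP'nn : 0 ≤ P' := Finset.prod_nonneg fun i _ => hMnn i
  have hprod : gfun a s v = ∏ i, (v i ^ a i * Real.exp (s i * v i)) := by
    rw [gfun, Finset.prod_mul_distrib]
    congr 1
    rw [Real.exp_sum]
  -- lower bound on 1 - exp(sum)
  have hsum : ∑ j, s j * v j ≤ s j₀ * v j₀ := by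
    have h1 : ∑ j, s j * v j ≤ ∑ j, (if j = j₀ then s j₀ * v j₀ else 0) := by
      refine Finset.sum_le_sum fun j _ => ?_
      by_cases h : j = j₀
      · simp [h]
      · simp only [h, if_false]
        exact mul_nonpos_of_nonpos_of_nonneg (hs j).le (hv j)
    simpa using h1
  have hlow : c * min 1 (v j₀) ≤ 1 - Real.exp (∑ j, s j * v j) := by
    have h2 := one_sub_exp_ge (hs j₀) (hv j₀)
    have h3 : Real.exp (∑ j, s j * v j) ≤ Real.exp (s j₀ * v j₀) := Real.exp_le_exp.2 hsum
    calc c * min 1 (v j₀) ≤ 1 - Real.exp (s j₀ * v j₀) := h2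
      _ ≤ 1 - Real.exp (∑ j, s j * v j) := by linarith
  -- upper bound on gfun
  have hup : gfun a s v ≤ max P P' * min 1 (v j₀) := by
    rcases le_or_gt 1 (v j₀) with h | h
    · rw [min_eq_left h]
      rw [hprod, mul_one]
      calc ∏ i, (v i ^ a i * Real.exp (s i * v i)) ≤ ∏ i, M i :=
            Finset.prod_le_prod (fun i _ => hfacnn i) (fun i _ => hfac i)
        _ ≤ max P P' := le_max_left _ _
    · rw [min_eq_right h.le]
      rw [hprod, ← Finset.mul_prod_erase Finset.univ _ (Finset.mem_univ j₀)]
      have hj : v j₀ ^ a j₀ * Real.exp (s j₀ * v j₀) ≤ v j₀ := by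
        have h1 : v j₀ ^ a j₀ ≤ v j₀ ^ 1 :=
          pow_le_pow_of_le_one (hv j₀) h.le (Nat.one_le_iff_ne_zero.2 hj₀)
        have h2 : Real.exp (s j₀ * v j₀) ≤ 1 :=
          Real.exp_le_one_iff.2 (mul_nonpos_of_nonpos_of_nonneg (hs j₀).le (hv j₀))
        calc v j₀ ^ a j₀ * Real.exp (s j₀ * v j₀) ≤ v j₀ ^ 1 * 1 :=
              mul_le_mul h1 h2 (Real.exp_pos _).le (pow_nonneg (hv j₀) _)
          _ = v j₀ := by ring
      calc (v j₀ ^ a j₀ * Real.exp (s j₀ * v j₀)) * ∏ i ∈ Finset.univ.erase j₀,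
              (v i ^ a i * Real.exp (s i * v i))
            ≤ v j₀ * P' := by
              apply mul_le_mul hj (Finset.prod_le_prod (fun i _ => hfacnn i) (fun i _ => hfac i))
                (Finset.prod_nonneg fun i _ => hfacnn i) (hv j₀)
        _ ≤ max P P' * v j₀ := by
            rw [mul_comm]
            exact mul_le_mul_of_nonneg_right (le_max_right _ _) (hv j₀)
  calc gfun a s v ≤ max P P' * min 1 (v j₀) := hup
    _ = (max P P' / c) * (c * min 1 (v j₀)) := by field_simp
    _ ≤ (max P P' / c) * (1 - Real.exp (∑ j, s j * v j)) := by
        apply mul_le_mul_of_nonneg_left hlow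
        exact div_nonneg (le_max_of_le_left hPnn) hc.le

lemma integrable_gfun {n : ℕ} {μ : Measure (Fin n → ℝ)} (hsupp : μ (posSupp n)ᶜ = 0)
    (hint : ∀ s ∈ negOrth n, Integrable (fun v => Real.exp (∑ j, s j * v j) - 1) μ)
    {a : Fin n → ℕ} {s : Fin n → ℝ} (hs : s ∈ negOrth n)
    (j₀ : Fin n) (hj₀ : a j₀ ≠ 0) : Integrable (fun v => gfun a s v) μ := by
  set C := max (∏ i, ((a i).factorial : ℝ) * (-(s i) / 2)⁻¹ ^ (a i))
      (∏ i ∈ Finset.univ.erase j₀, ((a i).factorial : ℝ) * (-(s i) / 2)⁻¹ ^ (a i))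
      / (1 - Real.exp (s j₀)) with hC
  have hdom : Integrable (fun v => C * (1 - Real.exp (∑ j, s j * v j))) μ := by
    have h1 := (hint s hs).const_mul (-C)
    have : (fun v : Fin n → ℝ => C * (1 - Real.exp (∑ j, s j * v j)))
        = fun v : Fin n → ℝ => -C * (Real.exp (∑ j, s j * v j) - 1) := by
      funext v; ring
    rw [this]
    exact h1
  refine hdom.mono' ((continuous_gfun a s).aestronglyMeasurable) ?_
  filter_upwards [ae_posSupp hsupp] with v hv
  rw [Real.norm_eq_abs, abs_of_nonneg (gfun_nonneg a s hv.1)]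
  exact gfun_le hs j₀ hj₀ hv.1

lemma integrable_Gfun {n : ℕ} {μ : Measure (Fin n → ℝ)} (hsupp : μ (posSupp n)ᶜ = 0)
    (hint : ∀ s ∈ negOrth n, Integrable (fun v => Real.exp (∑ j, s j * v j) - 1) μ)
    (a : Fin n → ℕ) {s : Fin n → ℝ} (hs : s ∈ negOrth n) :
    Integrable (fun v => Gfun a s v) μ := by
  by_cases ha : a = 0
  · subst ha
    have : (fun v => Gfun (0 : Fin n → ℕ) s v)
        = fun v => Real.exp (∑ j, s j * v j) - 1 := by
      funext v
      simp [Gfun, gfun]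
    rw [this]
    exact hint s hs
  · obtain ⟨j₀, hj₀⟩ := Function.ne_iff.1 ha
    have : (fun v => Gfun a s v) = fun v => gfun a s v := by
      funext v; simp [Gfun, ha]
    rw [this]
    exact integrable_gfun hsupp hint hs j₀ hj₀


lemma continuous_lmap {n : ℕ} : Continuous (fun v : Fin n → ℝ => lmap v) :=
  continuous_finset_sum _ fun j _ => (continuous_apply j).smul continuous_const

lemma lmap_norm_le {n : ℕ} {v : Fin n → ℝ} (hv : ∀ j, 0 ≤ v j) : ‖lmap v‖ ≤ ∑ j, v j := by
  refine ContinuousLinearMap.opNorm_le_bound _ (Finset.sum_nonneg fun j _ => hv j) fun t => ?_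
  rw [lmap_apply, Real.norm_eq_abs]
  calc |∑ j, t j * v j| ≤ ∑ j, |t j * v j| := Finset.abs_sum_le_sum_abs _ _
    _ ≤ ∑ j, ‖t‖ * v j := by
        refine Finset.sum_le_sum fun j _ => ?_
        rw [abs_mul, abs_of_nonneg (hv j)]
        exact mul_le_mul_of_nonneg_right (norm_le_pi_norm t j) (hv j)
    _ = (∑ j, v j) * ‖t‖ := by rw [← Finset.mul_sum, mul_comm]

lemma prod_pow_add_single {n : ℕ} (a : Fin n → ℕ) (i : Fin n) (v : Fin n → ℝ) :
    ∏ j, v j ^ ((a + Pi.single i 1 : Fin n → ℕ) j) = (∏ j, v j ^ a j) * v i := by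
  simp only [Pi.add_apply, pow_add, Finset.prod_mul_distrib]
  congr 1
  have h1 : ∀ j ∈ Finset.univ, v j ^ (Pi.single i 1 : Fin n → ℕ) j
      = if j = i then v j else 1 := by
    intro j _
    rcases eq_or_ne j i with h | h
    · subst h; simp
    · simp [Pi.single_eq_of_ne h, h]
  rw [Finset.prod_congr rfl h1, Finset.prod_ite_eq' Finset.univ i (fun j => v j)]
  simp

lemma gfun_add_single {n : ℕ} (a : Fin n → ℕ) (i : Fin n) (s v : Fin n → ℝ) :
    gfun (a + Pi.single i 1) s v = gfun a s v * v i := by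
  rw [gfun, gfun, prod_pow_add_single]
  ring

lemma add_single_ne_zero {n : ℕ} (a : Fin n → ℕ) (i : Fin n) : a + Pi.single i 1 ≠ 0 := by
  intro h
  have := congrFun h i
  simp at this

lemma gfun_mono {n : ℕ} (a : Fin n → ℕ) {x σ v : Fin n → ℝ} (hxσ : ∀ j, x j ≤ σ j)
    (hv : ∀ j, 0 ≤ v j) : gfun a x v ≤ gfun a σ v := by
  refine mul_le_mul_of_nonneg_left (Real.exp_le_exp.2 ?_)
    (Finset.prod_nonneg fun i _ => pow_nonneg (hv i) _)
  exact Finset.sum_le_sum fun j _ => mul_le_mul_of_nonneg_right (hxσ j) (hv j)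

lemma hasFDerivAt_Gfun {n : ℕ} (a : Fin n → ℕ) (v x : Fin n → ℝ) :
    HasFDerivAt (fun s => Gfun a s v) ((gfun a x v) • lmap v) x := by
  have h0 : HasFDerivAt (fun s : Fin n → ℝ => ∑ j, s j * v j) (lmap v) x := by
    have h := (lmap v).hasFDerivAt (x := x)
    have he : (fun s : Fin n → ℝ => ∑ j, s j * v j) = ⇑(lmap v) := by
      funext s; rw [lmap_apply]
    rw [he]
    exact h
  have h3 := ((h0.exp.const_mul (∏ i, v i ^ a i)).sub_const
    (if a = 0 then (1:ℝ) else 0))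
  have h4 : gfun a x v • lmap v = (∏ i, v i ^ a i) • Real.exp (∑ j, x j * v j) • lmap v := by
    rw [smul_smul, gfun]
  rw [h4]
  exact h3

lemma hasFDerivAt_integral {n : ℕ} {μ : Measure (Fin n → ℝ)} (hsupp : μ (posSupp n)ᶜ = 0)
    (hint : ∀ s ∈ negOrth n, Integrable (fun v => Real.exp (∑ j, s j * v j) - 1) μ)
    (hne : Nonempty (Fin n)) (a : Fin n → ℕ) {s₀ : Fin n → ℝ} (hs₀ : s₀ ∈ negOrth n) :
    Integrable (fun v => gfun a s₀ v • lmap v) μ ∧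
    HasFDerivAt (fun s => ∫ v, Gfun a s v ∂μ) (∫ v, gfun a s₀ v • lmap v ∂μ) s₀ := by
  haveI := hne
  set ε := (Finset.univ.inf' Finset.univ_nonempty fun j => -s₀ j) / 2 with hεdef
  have hε : 0 < ε := by
    refine div_pos ?_ two_pos
    rw [Finset.lt_inf'_iff]
    intro j _
    have := hs₀ j
    linarith
  have hεle : ∀ j, ε ≤ -s₀ j / 2 := by
    intro j
    have h2 : Finset.univ.inf' Finset.univ_nonempty (fun j => -s₀ j) ≤ -s₀ j :=
      Finset.inf'_le _ (Finset.mem_univ j)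
    rw [hεdef]
    linarith
  set σ : Fin n → ℝ := fun j => s₀ j + ε with hσdef
  have hσ : σ ∈ negOrth n := by
    intro j
    have h1 := hεle j
    have h2 := hs₀ j
    simp only [hσdef]
    linarith
  have hball : ∀ x ∈ Metric.ball s₀ ε, ∀ j, x j ≤ σ j := by
    intro x hx j
    have h1 : dist (x j) (s₀ j) ≤ dist x s₀ := dist_le_pi_dist x s₀ j
    rw [Metric.mem_ball] at hx
    have h2 : |x j - s₀ j| < ε := by
      rw [← Real.dist_eq]
      exact lt_of_le_of_lt h1 hx
    have := (abs_lt.1 h2).2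
    simp only [hσdef]
    linarith
  set bound : (Fin n → ℝ) → ℝ := fun v => ∑ j, gfun (a + Pi.single j 1) σ v with hbdef
  have hbound_int : Integrable bound μ := by
    refine integrable_finset_sum _ fun j _ => ?_
    refine integrable_gfun hsupp hint hσ j ?_
    simp
  have h_bound : ∀ᵐ v ∂μ, ∀ x ∈ Metric.ball s₀ ε, ‖gfun a x v • lmap v‖ ≤ bound v := by
    filter_upwards [ae_posSupp hsupp] with v hv x hx
    refine le_trans (by simpa using ContinuousLinearMap.opNorm_smul_le (gfun a x v) (lmap v)) ?_
    rw [abs_of_nonneg (gfun_nonneg a x hv.1)]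
    calc gfun a x v * ‖lmap v‖ ≤ gfun a σ v * ∑ j, v j := by
          refine mul_le_mul (gfun_mono a (hball x hx) hv.1) (lmap_norm_le hv.1)
            (norm_nonneg _) (gfun_nonneg a σ hv.1)
      _ = bound v := by
          rw [hbdef, Finset.mul_sum]
          exact Finset.sum_congr rfl fun j _ => (gfun_add_single a j σ v).symm
  have hF'_meas : AEStronglyMeasurable (fun v => gfun a s₀ v • lmap v) μ :=
    ((continuous_gfun a s₀).smul continuous_lmap).aestronglyMeasurable
  constructor
  · refine hbound_int.mono' hF'_meas ?_
    filter_upwards [h_bound] with v hv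
    exact hv s₀ (Metric.mem_ball_self hε)
  · refine hasFDerivAt_integral_of_dominated_of_fderiv_le (Metric.ball_mem_nhds s₀ hε) ?_ ?_ hF'_meas h_bound hbound_int ?_
    · exact Filter.Eventually.of_forall fun x => (continuous_Gfun a x).aestronglyMeasurable
    · exact integrable_Gfun hsupp hint a hs₀
    · exact Filter.Eventually.of_forall fun v x _ => hasFDerivAt_Gfun a v x

lemma fderiv_integral_apply {n : ℕ} {μ : Measure (Fin n → ℝ)} (hsupp : μ (posSupp n)ᶜ = 0)
    (hint : ∀ s ∈ negOrth n, Integrable (fun v => Real.exp (∑ j, s j * v j) - 1) μ)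
    (hne : Nonempty (Fin n)) (a : Fin n → ℕ) {s₀ : Fin n → ℝ} (hs₀ : s₀ ∈ negOrth n)
    (i : Fin n) :
    fderiv ℝ (fun s => ∫ v, Gfun a s v ∂μ) s₀ (Pi.single i 1)
      = ∫ v, Gfun (a + Pi.single i 1) s₀ v ∂μ := by
  obtain ⟨hintF', hderiv⟩ := hasFDerivAt_integral hsupp hint hne a hs₀
  rw [hderiv.fderiv, ContinuousLinearMap.integral_apply hintF']
  refine integral_congr_ae (Filter.Eventually.of_forall fun v => ?_)
  simp only [ContinuousLinearMap.coe_smul', Pi.smul_apply, smul_eq_mul]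
  have h1 : lmap v (Pi.single i 1) = v i := by
    rw [lmap_apply]
    have : ∀ j ∈ Finset.univ, (Pi.single i 1 : Fin n → ℝ) j * v j
        = if j = i then v j else 0 := by
      intro j _
      rcases eq_or_ne j i with h | h
      · subst h; simp
      · simp [Pi.single_eq_of_ne h, h]
    rw [Finset.sum_congr rfl this, Finset.sum_ite_eq' Finset.univ i (fun j => v j)]
    simp
  rw [h1, Gfun, if_neg (add_single_ne_zero a i), sub_zero, gfun_add_single]


lemma isOpen_negOrth (n : ℕ) : IsOpen (negOrth n) := by
  have h : negOrth n = ⋂ j, {s : Fin n → ℝ | s j < 0} := by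
    ext s; simp [negOrth, Set.mem_iInter]
  rw [h]
  exact isOpen_iInter_of_finite fun j => isOpen_lt (continuous_apply j) continuous_const

lemma iterPD_eq {n : ℕ} {μ : Measure (Fin n → ℝ)} (hsupp : μ (posSupp n)ᶜ = 0)
    (hint : ∀ s ∈ negOrth n, Integrable (fun v => Real.exp (∑ j, s j * v j) - 1) μ)
    (hne : Nonempty (Fin n)) {ψ : (Fin n → ℝ) → ℝ}
    (hψ : ∀ s, ψ s = ∫ v, (Real.exp (∑ j, s j * v j) - 1) ∂μ) :
    ∀ (l : List (Fin n)), ∀ s ∈ negOrth n,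
      iterPD l ψ s = ∫ v, Gfun (fun i => l.count i) s v ∂μ := by
  intro l
  induction l with
  | nil =>
    intro s hs
    show ψ s = _
    rw [hψ]
    have h0 : (fun i => List.count i ([] : List (Fin n))) = (0 : Fin n → ℕ) := by
      funext i; simp
    rw [h0]
    refine integral_congr_ae (Filter.Eventually.of_forall fun v => ?_)
    simp [Gfun, gfun]
  | cons i l IH =>
    intro s hs
    show fderiv ℝ (iterPD l ψ) s (Pi.single i 1) = _
    have hev : iterPD l ψ =ᶠ[nhds s] fun s' => ∫ v, Gfun (fun j => l.count j) s' v ∂μ := by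
      filter_upwards [(isOpen_negOrth n).mem_nhds hs] with s' hs' using IH s' hs'
    rw [hev.fderiv_eq, fderiv_integral_apply hsupp hint hne (fun j => l.count j) hs i]
    have hcnt : (fun j => (i :: l).count j) = (fun j => l.count j) + Pi.single i 1 := by
      funext j
      rcases eq_or_ne j i with h | h
      · subst h; simp [List.count_cons]
      · simp [List.count_cons, Pi.single_apply, h, Ne.symm h]
    rw [hcnt]

lemma count_flatMap_replicate {n : ℕ} (m : Fin n → ℕ) (i : Fin n) :
    ((List.finRange n).flatMap (fun j => List.replicate (2 * m j + 1) j)).count i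
      = 2 * m i + 1 := by
  have hgen : ∀ L : List (Fin n),
      (L.flatMap (fun j => List.replicate (2 * m j + 1) j)).count i
        = (2 * m i + 1) * L.count i := by
    intro L
    induction L with
    | nil => simp
    | cons j L IHL =>
      rw [List.flatMap_cons, List.count_append, IHL, List.count_cons, List.count_replicate]
      split_ifs with h1 <;> try ring
      all_goals simp_all
  rw [hgen, List.count_eq_one_of_mem (List.nodup_finRange n) (List.mem_finRange i), mul_one]

end Aux

/-- if the mixed derivative `∂^{2m+1}ψ` (order `2mᵢ+1` in each
variable) has a finite limit at `0⁻`, then `∫ ∏ v_i^{2m_i+1} dμ(v) < ∞`. -/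
theorem moment_finite_of_derivative_limit
    {n : ℕ} (μ : Measure (Fin n → ℝ)) (hsupp : μ (posSupp n)ᶜ = 0)
    (hint : ∀ s ∈ negOrth n,
      Integrable (fun v => Real.exp (∑ j, s j * v j) - 1) μ)
    (ψ : (Fin n → ℝ) → ℝ)
    (hψ : ∀ s, ψ s = ∫ v, (Real.exp (∑ j, s j * v j) - 1) ∂μ)
    (hψT : InT ψ)
    (m : Fin n → ℕ) (L : ℝ)
    (hlim : Tendsto
      (iterPD ((List.finRange n).flatMap (fun j => List.replicate (2 * m j + 1) j)) ψ)
      (nhdsWithin 0 (negOrth n)) (nhds L)) :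
    Integrable (fun v : Fin n → ℝ => ∏ i, v i ^ (2 * m i + 1)) μ := by
  rcases Nat.eq_zero_or_pos n with hn | hn
  · subst hn
    have hempty : (posSupp 0)ᶜ = Set.univ := by
      ext v
      simp only [Set.mem_compl_iff, Set.mem_univ, iff_true]
      intro hv
      exact hv.2 (funext fun j => j.elim0)
    have hμ : μ = 0 := by
      have h := hsupp
      rw [hempty] at h
      exact Measure.measure_univ_eq_zero.1 h
    rw [hμ]
    exact integrable_zero_measure
  · haveI hne : Nonempty (Fin n) := Fin.pos_iff_nonempty.1 hn
    set c : Fin n → ℕ := fun i => 2 * m i + 1 with hc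
    have hc0 : c ≠ 0 := by
      intro h
      have h2 := congrFun h (Classical.arbitrary (Fin n))
      simp only [hc, Pi.zero_apply] at h2
      omega
    have hGg : ∀ s v, Aux.Gfun c s v = Aux.gfun c s v := by
      intro s v; simp [Aux.Gfun, hc0]
    have hcount : (fun i => ((List.finRange n).flatMap
        (fun j => List.replicate (2 * m j + 1) j)).count i) = c := by
      funext i
      exact Aux.count_flatMap_replicate m i
    have hiter : ∀ s ∈ negOrth n, iterPD ((List.finRange n).flatMap
        (fun j => List.replicate (2 * m j + 1) j)) ψ s = ∫ v, Aux.Gfun c s v ∂μ := by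
      intro s hs
      rw [Aux.iterPD_eq hsupp hint hne hψ _ s hs, hcount]
    set sk : ℕ → Fin n → ℝ := fun k _ => -(1 / ((k : ℝ) + 1)) with hsk
    have hskmem : ∀ k, sk k ∈ negOrth n := by
      intro k j
      have h1 : (0:ℝ) < 1 / ((k:ℝ)+1) := by positivity
      simp only [hsk]
      linarith
    have hsk0 : Tendsto sk atTop (nhds (0 : Fin n → ℝ)) := by
      rw [tendsto_pi_nhds]
      intro j
      have h2 := (tendsto_one_div_add_atTop_nhds_zero_nat (𝕜 := ℝ)).neg
      simp only [neg_zero] at h2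
      simpa [hsk] using h2
    have hskW : Tendsto sk atTop (nhdsWithin 0 (negOrth n)) :=
      tendsto_nhdsWithin_iff.2 ⟨hsk0, Filter.Eventually.of_forall hskmem⟩
    have hL : Tendsto (fun k => ∫ v, Aux.Gfun c (sk k) v ∂μ) atTop (nhds L) :=
      (hlim.comp hskW).congr fun k => hiter (sk k) (hskmem k)
    have haeP := Aux.ae_posSupp hsupp
    have hmeas : ∀ k, AEMeasurable (fun v => ENNReal.ofReal (Aux.Gfun c (sk k) v)) μ :=
      fun k => ((ENNReal.continuous_ofReal.comp
        (Aux.continuous_Gfun c (sk k))).measurable).aemeasurable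
    have hmono : ∀ᵐ v ∂μ, Monotone fun k => ENNReal.ofReal (Aux.Gfun c (sk k) v) := by
      filter_upwards [haeP] with v hv
      intro k k' hkk
      apply ENNReal.ofReal_le_ofReal
      rw [hGg, hGg]
      refine Aux.gfun_mono c (fun j => ?_) hv.1
      have hk : ((k:ℝ)+1) ≤ ((k':ℝ)+1) := by
        have : (k:ℝ) ≤ (k':ℝ) := Nat.cast_le.2 hkk
        linarith
      have h1 : (1:ℝ) / ((k':ℝ)+1) ≤ 1 / ((k:ℝ)+1) :=
        one_div_le_one_div_of_le (by positivity) hk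
      simp only [hsk]
      linarith
    have htend : ∀ᵐ v ∂μ, Tendsto (fun k => ENNReal.ofReal (Aux.Gfun c (sk k) v)) atTop
        (nhds (ENNReal.ofReal (∏ i, v i ^ c i))) := by
      refine Filter.Eventually.of_forall fun v => ?_
      have hS : ∀ k : ℕ, Aux.Gfun c (sk k) v = (∏ i, v i ^ c i) *
          Real.exp (-(1 / ((k:ℝ)+1)) * ∑ j, v j) := by
        intro k
        rw [hGg, Aux.gfun]
        congr 2
        rw [Finset.mul_sum]
      have h1 : Tendsto (fun k : ℕ => -(1 / ((k:ℝ)+1)) * ∑ j, v j) atTop (nhds 0) := by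
        have h0 := (tendsto_one_div_add_atTop_nhds_zero_nat (𝕜 := ℝ)).neg.mul_const (∑ j, v j)
        simpa using h0
      have h2 : Tendsto (fun k : ℕ => Real.exp (-(1 / ((k:ℝ)+1)) * ∑ j, v j)) atTop
          (nhds 1) := by
        have h0 := (Real.continuous_exp.tendsto 0).comp h1
        simpa [Function.comp_def] using h0
      have h3 := (tendsto_const_nhds (x := (∏ i, v i ^ c i)) (f := atTop (α := ℕ))).mul h2
      rw [mul_one] at h3
      have h4 : Tendsto (fun k => Aux.Gfun c (sk k) v) atTop (nhds (∏ i, v i ^ c i)) := by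
        simp_rw [hS]
        exact h3
      exact (ENNReal.continuous_ofReal.tendsto _).comp h4
    have key := lintegral_tendsto_of_tendsto_of_monotone hmeas hmono htend
    have hnn : ∀ k : ℕ, 0 ≤ᵐ[μ] fun v => Aux.Gfun c (sk k) v := by
      intro k
      filter_upwards [haeP] with v hv
      rw [hGg]
      exact Aux.gfun_nonneg c (sk k) hv.1
    have heq : ∀ k : ℕ, ∫⁻ v, ENNReal.ofReal (Aux.Gfun c (sk k) v) ∂μ
        = ENNReal.ofReal (∫ v, Aux.Gfun c (sk k) v ∂μ) := fun k =>
      (MeasureTheory.ofReal_integral_eq_lintegral_ofReal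
        (Aux.integrable_Gfun hsupp hint c (hskmem k)) (hnn k)).symm
    have key2 : Tendsto (fun k : ℕ => ∫⁻ v, ENNReal.ofReal (Aux.Gfun c (sk k) v) ∂μ) atTop
        (nhds (ENNReal.ofReal L)) := by
      simp_rw [heq]
      exact (ENNReal.continuous_ofReal.tendsto L).comp hL
    have hfin : ∫⁻ v, ENNReal.ofReal (∏ i, v i ^ c i) ∂μ = ENNReal.ofReal L :=
      tendsto_nhds_unique key key2
    show Integrable (fun v : Fin n → ℝ => ∏ i, v i ^ c i) μ
    have hnn2 : 0 ≤ᵐ[μ] fun v : Fin n → ℝ => ∏ i, v i ^ c i := by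
      filter_upwards [haeP] with v hv
      exact Finset.prod_nonneg fun i _ => pow_nonneg (hv.1 i) _
    refine ⟨Continuous.aestronglyMeasurable ?_, ?_⟩
    · exact continuous_finset_prod _ fun i _ => (continuous_apply i).pow _
    · rw [hasFiniteIntegral_iff_ofReal hnn2, hfin]
      exact ENNReal.ofReal_lt_top
end

section
/- Let T_A and T_B be commuting bounded C₀-semigroups on a Banach space X with generators A, B, both extending holomorphically to the right half-plane ℂ₊ with ‖T_A(ζ)‖, ‖T_B(ζ)‖ ≤ M|ζ|^m. If A − B is bounded, then for all z ∈ ℂ₊ and all x ∈ X: (T_A(z) − T_B(z))x = ∫_{[0,z]} T_B(z − s)(A − B)T_A(s)x ds (contour integral along the segment from 0 to z), and consequently ‖T_A(z) − T_B(z)‖ ≤ M²|z|^{2m+1}‖A − B‖. -/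
open MeasureTheory Filter Set

variable {X : Type*} [NormedAddCommGroup X] [NormedSpace ℂ X] [CompleteSpace X]

/-!
For `δ > 0` the path `s ↦ T_B((1 - s)z + δ) T_A(sz + δ) x`, `s ∈ [0, 1]`, stays inside `ℂ₊`, where
both semigroups are holomorphic; the shift keeps its endpoints away from the boundary, where they
are only strongly continuous. A holomorphic semigroup maps into the domain of its generator, and
there its complex derivative is the generator: `T'(ζ) x = A T(ζ) x`, and `T'(ζ) x = T(ζ) A x` for
`x ∈ D(A)`. So the path has derivative `z T_B((1 - s)z + δ) (A - B) T_A(sz + δ) x`, and the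
fundamental theorem of calculus gives the Duhamel formula shifted by `δ`. Letting `δ → 0⁺` uses
strong continuity at `0` on the left and dominated convergence, via the bound `M |ζ|^m`, on the
right. The norm estimate then follows by bounding the integrand by `M² |z|^(2m) ‖C‖ ‖x‖`.
-/

open scoped Topology

lemma isOpen_re_pos : IsOpen {z : ℂ | 0 < z.re} := isOpen_lt continuous_const Complex.continuous_re

lemma tendsto_apply_of_isBoundedUnder {α 𝕜 E F : Type*} [NontriviallyNormedField 𝕜]
    [NormedAddCommGroup E] [NormedSpace 𝕜 E] [NormedAddCommGroup F] [NormedSpace 𝕜 F]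
    {l : Filter α} {S : α → E →L[𝕜] F} {v : α → E} {v₀ : E} {w : F}
    (hS : IsBoundedUnder (· ≤ ·) l fun a => ‖S a‖) (hSv : Tendsto (fun a => S a v₀) l (𝓝 w))
    (hv : Tendsto v l (𝓝 v₀)) : Tendsto (fun a => S a (v a)) l (𝓝 w) := by
  have hdiff : Tendsto (fun a => S a (v a - v₀)) l (𝓝 0) :=
    (tendsto_sub_nhds_zero_iff.2 hv).op_zero_isBoundedUnder_le hS (fun u T => T u)
      fun u T => by simpa [mul_comm] using T.le_opNorm u
  simpa using hdiff.add hSv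

lemma tendsto_add_ofReal_nhdsGT_zero (w : ℂ) :
    Tendsto (fun ε : ℝ => w + ε) (𝓝[>] 0) (𝓝 w) :=
  ((continuous_const.add Complex.continuous_ofReal).tendsto' 0 w (by simp)).mono_left
    nhdsWithin_le_nhds

lemma norm_smul_add_ofReal_le {s ε : ℝ} (z : ℂ) (hs₀ : 0 ≤ s) (hs₁ : s ≤ 1) (hε₀ : 0 ≤ ε)
    (hε₁ : ε ≤ 1) : ‖s • z + ε‖ ≤ ‖z‖ + 1 :=
  calc ‖s • z + ε‖ ≤ s * ‖z‖ + ε := by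
        simpa [norm_smul, abs_of_nonneg hs₀, abs_of_nonneg hε₀] using norm_add_le (s • z) (ε : ℂ)
    _ ≤ ‖z‖ + 1 := by nlinarith [norm_nonneg z]

lemma ae_mem_Ioo_of_mem_uIoc :
    ∀ᵐ t : ℝ, t ∈ uIoc (0:ℝ) 1 → t ∈ Ioo (0:ℝ) 1 := by
  filter_upwards [measure_singleton (μ := volume) (1:ℝ) |> measure_eq_zero_iff_ae_notMem.1]
    with t ht1 ht
  rw [uIoc_of_le zero_le_one] at ht
  exact ⟨ht.1, lt_of_le_of_ne ht.2 ht1⟩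

section

variable {E : Type*} [NormedAddCommGroup E] [NormedSpace ℂ E]

lemma HasDerivAt.tendsto_ofReal_slope_zero_right {f : ℂ → E} {f' : E} {ζ : ℂ}
    (h : HasDerivAt f f' ζ) :
    Tendsto (fun t : ℝ => (t : ℂ)⁻¹ • (f (ζ + t) - f ζ)) (𝓝[>] 0) (𝓝 f') := by
  have hpath : HasDerivAt (fun t : ℝ => ζ + (t : ℂ)) 1 0 := by
    simpa using (Complex.ofRealCLM.hasDerivAt (x := 0)).const_add ζ
  have hshift := h.scomp_of_eq 0 hpath (by simp)
  simpa [Function.comp_def, ← Complex.ofReal_inv, Complex.coe_smul] using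
    hshift.tendsto_slope_zero_right

lemma IsC0.tendsto_nhdsGT_zero {T : ℝ → E →L[ℂ] E} (hT : IsC0 T) (x : E) :
    Tendsto (fun t => T t x) (𝓝[>] 0) (𝓝 x) := by
  have h := ((hT.2.2 x) 0 self_mem_Ici).tendsto.mono_left (nhdsWithin_mono 0 Ioi_subset_Ici_self)
  simpa [hT.1] using h

structure IsHolomorphicGen (T : ℂ → E →L[ℂ] E) (A : E →ₗ.[ℂ] E) : Prop where
  differentiableOn : DifferentiableOn ℂ T {z : ℂ | 0 < z.re}
  map_add : ∀ z w : ℂ, 0 < z.re → 0 < w.re → T (z + w) = T z ∘L T w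
  isGen : IsGen (fun t : ℝ => T t) A

namespace IsHolomorphicGen

variable {T : ℂ → E →L[ℂ] E} {A : E →ₗ.[ℂ] E} {ζ : ℂ}

lemma hasDerivAt (hT : IsHolomorphicGen T A) (hζ : 0 < ζ.re) : HasDerivAt T (deriv T ζ) ζ :=
  (hT.differentiableOn.differentiableAt (isOpen_re_pos.mem_nhds hζ)).hasDerivAt

lemma tendsto_genQuotient_apply (hT : IsHolomorphicGen T A) (hζ : 0 < ζ.re) (x : E) :
    Tendsto (fun t : ℝ => (t : ℂ)⁻¹ • (T t (T ζ x) - T ζ x)) (𝓝[>] 0) (𝓝 (deriv T ζ x)) := by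
  have hx : HasDerivAt (fun w => T w x) (deriv T ζ x) ζ := by
    simpa using (hT.hasDerivAt hζ).clm_apply (hasDerivAt_const ζ x)
  refine hx.tendsto_ofReal_slope_zero_right.congr' ?_
  filter_upwards [self_mem_nhdsWithin] with t ht
  rw [add_comm ζ, hT.map_add _ _ (by simpa using ht) hζ, ContinuousLinearMap.comp_apply]

lemma mem_domain (hT : IsHolomorphicGen T A) (hζ : 0 < ζ.re) (x : E) : T ζ x ∈ A.domain :=
  (hT.isGen.1 _).2 ⟨_, hT.tendsto_genQuotient_apply hζ x⟩

lemma deriv_apply (hT : IsHolomorphicGen T A) (hζ : 0 < ζ.re) (x : E) :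
    deriv T ζ x = A ⟨T ζ x, hT.mem_domain hζ x⟩ :=
  tendsto_nhds_unique (hT.tendsto_genQuotient_apply hζ x) (hT.isGen.2 _)

lemma deriv_apply_of_mem (hT : IsHolomorphicGen T A) (hζ : 0 < ζ.re) (y : A.domain) :
    deriv T ζ y = T ζ (A y) := by
  have hy : HasDerivAt (fun w => T w y) (deriv T ζ y) ζ := by
    simpa using (hT.hasDerivAt hζ).clm_apply (hasDerivAt_const ζ (y : E))
  refine tendsto_nhds_unique hy.tendsto_ofReal_slope_zero_right ?_
  refine (((T ζ).continuous.tendsto _).comp (hT.isGen.2 y)).congr' ?_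
  filter_upwards [self_mem_nhdsWithin] with t ht
  simp [hT.map_add ζ t hζ (by simpa using ht)]

end IsHolomorphicGen

lemma continuousAt_duhamel_integrand {TA TB : ℂ → E →L[ℂ] E}
    (hTA : ContinuousOn TA {w : ℂ | 0 < w.re}) (hTB : ContinuousOn TB {w : ℂ | 0 < w.re})
    (C : E →L[ℂ] E) (z : ℂ) (x : E) {p : ℝ × ℂ} (h₁ : 0 < ((1 - p.1) • z + p.2).re)
    (h₂ : 0 < (p.1 • z + p.2).re) :
    ContinuousAt (fun p : ℝ × ℂ => TB ((1 - p.1) • z + p.2) (C (TA (p.1 • z + p.2) x))) p :=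
  ((hTB.continuousAt (isOpen_re_pos.mem_nhds h₁)).comp
    (f := fun p : ℝ × ℂ => (1 - p.1) • z + p.2) (by fun_prop)).clm_apply <|
    C.continuous.continuousAt.comp <|
      ((hTA.continuousAt (isOpen_re_pos.mem_nhds h₂)).comp
        (f := fun p : ℝ × ℂ => p.1 • z + p.2) (by fun_prop)).clm_apply continuousAt_const

lemma hasDerivAt_duhamel {TA TB : ℂ → E →L[ℂ] E} {A B : E →ₗ.[ℂ] E}
    (hA : IsHolomorphicGen TA A) (hB : IsHolomorphicGen TB B) (hdom : A.domain = B.domain)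
    {C : E →L[ℂ] E} (hC : ∀ x (hxA : x ∈ A.domain) (hxB : x ∈ B.domain),
      C x = A ⟨x, hxA⟩ - B ⟨x, hxB⟩)
    {c w : ℂ} (hw : 0 < w.re) (hcw : 0 < (c - w).re) (x : E) :
    HasDerivAt (fun w => TB (c - w) (TA w x)) (TB (c - w) (C (TA w x))) w := by
  have hTB : HasDerivAt (fun w => TB (c - w)) (-deriv TB (c - w)) w :=
    (hB.hasDerivAt hcw).comp_const_sub c w
  have hTA : HasDerivAt (fun w => TA w x) (deriv TA w x) w := by
    simpa using (hA.hasDerivAt hw).clm_apply (hasDerivAt_const w x)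
  convert hTB.clm_apply hTA using 1
  have hyA := hA.mem_domain hw x
  have hyB : TA w x ∈ B.domain := hdom ▸ hyA
  rw [hC _ hyA hyB, map_sub, hA.deriv_apply hw x, neg_apply,
    hB.deriv_apply_of_mem hcw ⟨_, hyB⟩]
  abel

lemma duhamel_shifted [CompleteSpace E] {TA TB : ℂ → E →L[ℂ] E} {A B : E →ₗ.[ℂ] E}
    (hA : IsHolomorphicGen TA A) (hB : IsHolomorphicGen TB B) (hdom : A.domain = B.domain)
    {C : E →L[ℂ] E} (hC : ∀ x (hxA : x ∈ A.domain) (hxB : x ∈ B.domain),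
      C x = A ⟨x, hxA⟩ - B ⟨x, hxB⟩)
    {z δ : ℂ} (hz : 0 ≤ z.re) (hδ : 0 < δ.re) (x : E) :
    TB δ (TA (z + δ) x) - TB (z + δ) (TA δ x) =
      z • ∫ t in (0:ℝ)..1, TB ((1 - t) • z + δ) (C (TA (t • z + δ) x)) := by
  have hre : ∀ t ∈ uIcc (0:ℝ) 1, 0 < ((1 - t) • z + δ).re ∧ 0 < (t • z + δ).re := by
    intro t ht
    rw [uIcc_of_le zero_le_one] at ht
    simp only [Complex.add_re, Complex.real_smul, Complex.re_ofReal_mul]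
    constructor <;> nlinarith [ht.1, ht.2]
  have hderiv : ∀ t ∈ uIcc (0:ℝ) 1,
      HasDerivAt (fun s : ℝ => TB ((1 - s) • z + δ) (TA (s • z + δ) x))
        (z • TB ((1 - t) • z + δ) (C (TA (t • z + δ) x))) t := by
    intro t ht
    have hc : ∀ s : ℝ, z + δ + δ - (s • z + δ) = (1 - s) • z + δ := fun s => by
      rw [sub_smul, one_smul]; ring
    have hpath : HasDerivAt (fun s : ℝ => s • z + δ) z t := by
      simpa using ((hasDerivAt_id t).smul_const z).add_const δ
    have h := (hasDerivAt_duhamel hA hB hdom hC (c := z + δ + δ) (hre t ht).2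
      (by rw [hc]; exact (hre t ht).1) x).scomp t hpath
    simpa only [Function.comp_def, hc] using h
  have hint : IntervalIntegrable
      (fun t : ℝ => z • TB ((1 - t) • z + δ) (C (TA (t • z + δ) x))) volume 0 1 :=
    ContinuousOn.intervalIntegrable <| continuousOn_of_forall_continuousAt fun t ht =>
      ((continuousAt_duhamel_integrand hA.differentiableOn.continuousOn
        hB.differentiableOn.continuousOn C z x (hre t ht).1 (hre t ht).2).comp
          (f := fun t : ℝ => (t, δ)) (by fun_prop)).const_smul z
  rw [← intervalIntegral.integral_smul, intervalIntegral.integral_eq_sub_of_hasDerivAt hderiv hint]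
  simp

lemma norm_apply_apply_apply_le_of_norm_le_pow {TA TB : ℂ → E →L[ℂ] E} {M R : ℝ} {m : ℕ}
    (hMA : ∀ z : ℂ, 0 < z.re → ‖TA z‖ ≤ M * ‖z‖ ^ m)
    (hMB : ∀ z : ℂ, 0 < z.re → ‖TB z‖ ≤ M * ‖z‖ ^ m) (hM : 0 ≤ M) (C : E →L[ℂ] E)
    {w₁ w₂ : ℂ} (h₁ : 0 < w₁.re) (h₂ : 0 < w₂.re) (hR₁ : ‖w₁‖ ≤ R) (hR₂ : ‖w₂‖ ≤ R) (x : E) :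
    ‖TB w₁ (C (TA w₂ x))‖ ≤ M ^ 2 * R ^ (2 * m) * ‖C‖ * ‖x‖ := by
  have hB : ‖TB w₁‖ ≤ M * R ^ m := (hMB w₁ h₁).trans (by gcongr)
  have hA : ‖TA w₂‖ ≤ M * R ^ m := (hMA w₂ h₂).trans (by gcongr)
  calc ‖TB w₁ (C (TA w₂ x))‖ ≤ ‖TB w₁‖ * (‖C‖ * (‖TA w₂‖ * ‖x‖)) :=
        (TB w₁).le_opNorm_of_le <| C.le_opNorm_of_le <| (TA w₂).le_opNorm x
    _ ≤ M * R ^ m * (‖C‖ * (M * R ^ m * ‖x‖)) := by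
        gcongr
        exact hA.trans' (norm_nonneg _)
    _ = M ^ 2 * R ^ (2 * m) * ‖C‖ * ‖x‖ := by ring

lemma tendsto_duhamel_shifted_sub {TA TB : ℂ → E →L[ℂ] E} {M : ℝ} {m : ℕ}
    (hTA0 : IsC0 (fun t : ℝ => TA t)) (hTB0 : IsC0 (fun t : ℝ => TB t))
    (hTA : ContinuousOn TA {w : ℂ | 0 < w.re}) (hTB : ContinuousOn TB {w : ℂ | 0 < w.re})
    (hMB : ∀ z : ℂ, 0 < z.re → ‖TB z‖ ≤ M * ‖z‖ ^ m) {z : ℂ} (hz : 0 < z.re) (x : E) :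
    Tendsto (fun ε : ℝ => TB ε (TA (z + ε) x) - TB (z + ε) (TA ε x)) (𝓝[>] 0)
      (𝓝 (TA z x - TB z x)) := by
  have hTAz := (hTA.continuousAt (isOpen_re_pos.mem_nhds hz)).tendsto.comp
    (tendsto_add_ofReal_nhdsGT_zero z)
  have hTBz := (hTB.continuousAt (isOpen_re_pos.mem_nhds hz)).tendsto.comp
    (tendsto_add_ofReal_nhdsGT_zero z)
  have hbdd : IsBoundedUnder (· ≤ ·) (𝓝[>] 0) fun ε : ℝ => ‖TB ε‖ := by
    have hpow : Tendsto (fun ε : ℝ => M * ‖(ε : ℂ)‖ ^ m) (𝓝[>] 0) (𝓝 (M * ‖((0 : ℝ) : ℂ)‖ ^ m)) :=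
      (Continuous.tendsto (by fun_prop) 0).mono_left nhdsWithin_le_nhds
    refine hpow.isBoundedUnder_le.mono_le ?_
    filter_upwards [self_mem_nhdsWithin] with ε hε
    exact hMB ε (by simpa using hε)
  refine .sub (tendsto_apply_of_isBoundedUnder hbdd (hTB0.tendsto_nhdsGT_zero _) ?_)
    (tendsto_apply_of_isBoundedUnder hTBz.norm.isBoundedUnder_le ?_ (hTA0.tendsto_nhdsGT_zero x))
  · exact ((ContinuousLinearMap.apply ℂ E x).continuous.tendsto _).comp hTAz
  · exact ((ContinuousLinearMap.apply ℂ E x).continuous.tendsto _).comp hTBz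

lemma tendsto_duhamel_shifted_integral {TA TB : ℂ → E →L[ℂ] E} {M : ℝ} {m : ℕ}
    (hTA : ContinuousOn TA {w : ℂ | 0 < w.re}) (hTB : ContinuousOn TB {w : ℂ | 0 < w.re})
    (hMA : ∀ z : ℂ, 0 < z.re → ‖TA z‖ ≤ M * ‖z‖ ^ m)
    (hMB : ∀ z : ℂ, 0 < z.re → ‖TB z‖ ≤ M * ‖z‖ ^ m) (hM : 0 ≤ M) (C : E →L[ℂ] E)
    {z : ℂ} (hz : 0 < z.re) (x : E) :
    Tendsto (fun ε : ℝ => ∫ t in (0:ℝ)..1, TB ((1 - t) • z + ε) (C (TA (t • z + ε) x)))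
      (𝓝[>] 0) (𝓝 (∫ t in (0:ℝ)..1, TB ((1 - t) • z) (C (TA (t • z) x)))) := by
  have hre : ∀ {s ε : ℝ}, 0 ≤ s → 0 ≤ ε → 0 < s ∨ 0 < ε → 0 < (s • z + ε).re := by
    intro s ε hs hε hsε
    simp only [Complex.add_re, Complex.real_smul, Complex.re_ofReal_mul, Complex.ofReal_re]
    rcases hsε with h | h
    · nlinarith [mul_pos h hz]
    · nlinarith [mul_nonneg hs hz.le]
  refine intervalIntegral.tendsto_integral_filter_of_dominated_convergence
    (fun _ => M ^ 2 * (‖z‖ + 1) ^ (2 * m) * ‖C‖ * ‖x‖) ?_ ?_ intervalIntegrable_const ?_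
  · filter_upwards [self_mem_nhdsWithin] with ε hε
    refine ContinuousOn.aestronglyMeasurable (continuousOn_of_forall_continuousAt fun t ht => ?_)
      measurableSet_uIoc
    rw [uIoc_of_le zero_le_one] at ht
    exact (continuousAt_duhamel_integrand hTA hTB C z x (hre (sub_nonneg.2 ht.2) hε.le (.inr hε))
      (hre ht.1.le hε.le (.inr hε))).comp
      (f := fun t : ℝ => (t, (ε : ℂ))) (by fun_prop)
  · filter_upwards [Ioc_mem_nhdsGT zero_lt_one] with ε hε
    filter_upwards [ae_mem_Ioo_of_mem_uIoc] with t hIoo hmem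
    have ht := hIoo hmem
    exact norm_apply_apply_apply_le_of_norm_le_pow hMA hMB hM C
      (hre (sub_nonneg.2 ht.2.le) hε.1.le (.inr hε.1))
      (hre ht.1.le hε.1.le (.inr hε.1))
      (norm_smul_add_ofReal_le z (sub_nonneg.2 ht.2.le) (sub_le_self 1 ht.1.le) hε.1.le hε.2)
      (norm_smul_add_ofReal_le z ht.1.le ht.2.le hε.1.le hε.2) x
  · filter_upwards [ae_mem_Ioo_of_mem_uIoc] with t hIoo hmem
    have ht := hIoo hmem
    have hat := continuousAt_duhamel_integrand hTA hTB C z x (p := (t, ((0 : ℝ) : ℂ)))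
      (hre (sub_pos.2 ht.2).le le_rfl (.inl (sub_pos.2 ht.2))) (hre ht.1.le le_rfl (.inl ht.1))
    have hpath : Tendsto (fun ε : ℝ => (t, (ε : ℂ))) (𝓝[>] 0) (𝓝 (t, ((0 : ℝ) : ℂ))) :=
      (Continuous.tendsto (by fun_prop) 0).mono_left nhdsWithin_le_nhds
    simpa [Function.comp_def] using hat.tendsto.comp hpath

lemma norm_duhamel_integral_le {TA TB : ℂ → E →L[ℂ] E} {M : ℝ} {m : ℕ}
    (hMA : ∀ z : ℂ, 0 < z.re → ‖TA z‖ ≤ M * ‖z‖ ^ m)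
    (hMB : ∀ z : ℂ, 0 < z.re → ‖TB z‖ ≤ M * ‖z‖ ^ m) (hM : 0 ≤ M) (C : E →L[ℂ] E)
    {z : ℂ} (hz : 0 < z.re) (x : E) :
    ‖∫ t in (0:ℝ)..1, TB ((1 - t) • z) (C (TA (t • z) x))‖ ≤
      M ^ 2 * ‖z‖ ^ (2 * m) * ‖C‖ * ‖x‖ := by
  have hsz : ∀ {s : ℝ}, s ∈ Ioo (0:ℝ) 1 → 0 < (s • z).re ∧ ‖s • z‖ ≤ ‖z‖ := fun hs =>
    ⟨by simpa using mul_pos hs.1 hz,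
      by simpa [norm_smul, abs_of_pos hs.1] using mul_le_of_le_one_left (norm_nonneg z) hs.2.le⟩
  have h1t : ∀ {t : ℝ}, t ∈ Ioo (0:ℝ) 1 → 1 - t ∈ Ioo (0:ℝ) 1 := fun ht =>
    ⟨sub_pos.2 ht.2, sub_lt_self 1 ht.1⟩
  have hbound : ∀ᵐ t : ℝ, t ∈ uIoc (0:ℝ) 1 →
      ‖TB ((1 - t) • z) (C (TA (t • z) x))‖ ≤ M ^ 2 * ‖z‖ ^ (2 * m) * ‖C‖ * ‖x‖ := by
    filter_upwards [ae_mem_Ioo_of_mem_uIoc] with t hIoo hmem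
    have ht := hIoo hmem
    exact norm_apply_apply_apply_le_of_norm_le_pow hMA hMB hM C (hsz (h1t ht)).1 (hsz ht).1
      (hsz (h1t ht)).2 (hsz ht).2 x
  simpa using intervalIntegral.norm_integral_le_of_norm_le_const_ae hbound

end

open Complex in
theorem holomorphic_semigroup_difference_general
    (TA TB : ℂ → X →L[ℂ] X) (m : ℕ) (M : ℝ)
    (hTA0 : IsC0 (fun t : ℝ => TA t)) (hTB0 : IsC0 (fun t : ℝ => TB t))
    (hTAhol : DifferentiableOn ℂ TA {z : ℂ | 0 < z.re})
    (hTBhol : DifferentiableOn ℂ TB {z : ℂ | 0 < z.re})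
    (hTAsg : ∀ z w : ℂ, 0 < z.re → 0 < w.re → TA (z + w) = TA z ∘L TA w)
    (hTBsg : ∀ z w : ℂ, 0 < z.re → 0 < w.re → TB (z + w) = TB z ∘L TB w)
    (hMA : ∀ z : ℂ, 0 < z.re → ‖TA z‖ ≤ M * ‖z‖ ^ m)
    (hMB : ∀ z : ℂ, 0 < z.re → ‖TB z‖ ≤ M * ‖z‖ ^ m)
    (A B : X →ₗ.[ℂ] X) (hA : IsGen (fun t : ℝ => TA t) A)
    (hB : IsGen (fun t : ℝ => TB t) B)
    (hdom : A.domain = B.domain)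
    (C : X →L[ℂ] X)
    (hC : ∀ x (hxA : x ∈ A.domain) (hxB : x ∈ B.domain),
      C x = A ⟨x, hxA⟩ - B ⟨x, hxB⟩)
    (z : ℂ) (hz : 0 < z.re) :
    (∀ x : X,
      TA z x - TB z x =
        z • ∫ t in (0:ℝ)..1, TB ((1 - t) • z) (C (TA (t • z) x))) ∧
    ‖TA z - TB z‖ ≤ M ^ 2 * ‖z‖ ^ (2 * m + 1) * ‖C‖ := by
  have hM : 0 ≤ M := nonneg_of_mul_nonneg_left ((norm_nonneg _).trans (hMA z hz))
    (pow_pos (norm_pos_iff.2 fun h => by simp [h] at hz) m)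
  have hAgen : IsHolomorphicGen TA A := ⟨hTAhol, hTAsg, hA⟩
  have hBgen : IsHolomorphicGen TB B := ⟨hTBhol, hTBsg, hB⟩
  have hformula : ∀ x : X, TA z x - TB z x =
      z • ∫ t in (0:ℝ)..1, TB ((1 - t) • z) (C (TA (t • z) x)) := fun x =>
    tendsto_nhds_unique
      ((tendsto_duhamel_shifted_sub hTA0 hTB0 hTAhol.continuousOn hTBhol.continuousOn hMB hz
        x).congr'
        (eventually_nhdsWithin_of_forall fun ε hε =>
          duhamel_shifted hAgen hBgen hdom hC hz.le (by simpa using hε) x))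
      ((tendsto_duhamel_shifted_integral hTAhol.continuousOn hTBhol.continuousOn hMA hMB hM C
        hz x).const_smul z)
  refine ⟨hformula, ContinuousLinearMap.opNorm_le_bound _ (by positivity) fun x => ?_⟩
  calc ‖(TA z - TB z) x‖ = ‖z‖ * ‖∫ t in (0:ℝ)..1, TB ((1 - t) • z) (C (TA (t • z) x))‖ := by
        rw [sub_apply, hformula, norm_smul]
    _ ≤ ‖z‖ * (M ^ 2 * ‖z‖ ^ (2 * m) * ‖C‖ * ‖x‖) := by
        gcongr
        exact norm_duhamel_integral_le hMA hMB hM C hz x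
    _ = M ^ 2 * ‖z‖ ^ (2 * m + 1) * ‖C‖ * ‖x‖ := by ring

open Complex in
/-- for commuting bounded holomorphic semigroups of polynomial
growth `M|ζ|^m` on `ℂ₊` whose generators differ by a bounded operator `C`,
`(T_A(z) − T_B(z))x = ∫_{[0,z]} T_B(z−s) C T_A(s) x ds` and
`‖T_A(z) − T_B(z)‖ ≤ M²|z|^{2m+1}‖C‖`. -/
theorem holomorphic_semigroup_difference
    (TA TB : ℂ → X →L[ℂ] X) (m : ℕ) (M : ℝ)
    (hTA0 : IsC0 (fun t : ℝ => TA t)) (hTB0 : IsC0 (fun t : ℝ => TB t))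
    (hTAhol : DifferentiableOn ℂ TA {z : ℂ | 0 < z.re})
    (hTBhol : DifferentiableOn ℂ TB {z : ℂ | 0 < z.re})
    (hTAsg : ∀ z w : ℂ, 0 < z.re → 0 < w.re → TA (z + w) = TA z ∘L TA w)
    (hTBsg : ∀ z w : ℂ, 0 < z.re → 0 < w.re → TB (z + w) = TB z ∘L TB w)
    (hMA : ∀ z : ℂ, 0 < z.re → ‖TA z‖ ≤ M * ‖z‖ ^ m)
    (hMB : ∀ z : ℂ, 0 < z.re → ‖TB z‖ ≤ M * ‖z‖ ^ m)
    (hcomm : ∀ z w : ℂ, TA z ∘L TB w = TB w ∘L TA z)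
    (A B : X →ₗ.[ℂ] X) (hA : IsGen (fun t : ℝ => TA t) A)
    (hB : IsGen (fun t : ℝ => TB t) B)
    (hdom : A.domain = B.domain)
    (C : X →L[ℂ] X)
    (hC : ∀ x (hxA : x ∈ A.domain) (hxB : x ∈ B.domain),
      C x = A ⟨x, hxA⟩ - B ⟨x, hxB⟩)
    (z : ℂ) (hz : 0 < z.re) :
    (∀ x : X,
      TA z x - TB z x =
        z • ∫ t in (0:ℝ)..1, TB ((1 - t) • z) (C (TA (t • z) x))) ∧
    ‖TA z - TB z‖ ≤ M ^ 2 * ‖z‖ ^ (2 * m + 1) * ‖C‖ :=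
  holomorphic_semigroup_difference_general TA TB m M hTA0 hTB0 hTAhol hTBhol hTAsg hTBsg hMA hMB A B
    hA hB hdom C hC z hz
end
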